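/- arXiv:1608.01612 — 6 statements merged into one kernel-verified Lean document; each statement's English description precedes it below -/
import Mathlib

section
/- Let G be a finite graph, V_G = A ∪ B a partition of its vertex set, and S ⊆ V_G a subset such that there are no edges between A \ S and B \ S. Then |S| ≥ φ_G · |A|·|B| / |V_G|, where φ_G is the vertex expansion constant of G. -/
open Finset MeasureTheory Classical

noncomputable section

def wlen {V : Type*} {G : SimpleGraph V} (ω : V → ℝ) {u v : V} (w : G.Walk u v) : ℝ :=
  (w.darts.map (fun d => (ω d.toProd.1 + ω d.toProd.2) / 2)).sum

noncomputable def distw {V : Type*} (G : SimpleGraph V) (ω : V → ℝ) (u v : V) : ℝ :=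
  sInf {x | ∃ w : G.Walk u v, wlen ω w = x}

noncomputable def vbdry {V : Type*} [Fintype V] (G : SimpleGraph V) (U : Finset V) : Finset V :=
  U.filter (fun v => ∃ u ∉ U, G.Adj v u)

noncomputable def phi {V : Type*} [Fintype V] (G : SimpleGraph V) : ℝ :=
  sInf { r | ∃ U : Finset V, U.Nonempty ∧
    ((U \ vbdry G U).card : ℝ) ≤ (Fintype.card V : ℝ) / 2 ∧
    r = ((vbdry G U).card : ℝ) / (U.card : ℝ) }

noncomputable def sobs {X : Type*} [Fintype X] (d : X → X → ℝ) : ℝ :=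
  sSup { s | ∃ f : X → ℝ, (∀ x y, |f x - f y| ≤ d x y) ∧
    s = (∑ x : X, ∑ y : X, |f x - f y|) / ((Fintype.card X : ℝ))^2 }

noncomputable def spread {X : Type*} [Fintype X] (d : X → X → ℝ) : ℝ :=
  (∑ x : X, ∑ y : X, d x y) / ((Fintype.card X : ℝ))^2

noncomputable def csobs {V : Type*} [Fintype V] (G : SimpleGraph V) : ℝ :=
  sSup { s | ∃ ω : V → ℝ, (∀ v, 0 ≤ ω v) ∧
    (∑ v : V, ω v) / (Fintype.card V : ℝ) ≤ 1 ∧ s = sobs (distw G ω) }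


section AuxLemmas

variable {V : Type*} [Fintype V] {G : SimpleGraph V}

lemma phi_nonneg (G : SimpleGraph V) : 0 ≤ phi G := by
  apply Real.sInf_nonneg
  rintro r ⟨U, _, _, rfl⟩
  positivity

lemma phi_le {U : Finset V} (hU : U.Nonempty)
    (h : ((U \ vbdry G U).card : ℝ) ≤ (Fintype.card V : ℝ) / 2) :
    phi G ≤ ((vbdry G U).card : ℝ) / (U.card : ℝ) := by
  apply csInf_le
  · exact ⟨0, by rintro r ⟨U, _, _, rfl⟩; positivity⟩
  · exact ⟨U, hU, h, rfl⟩

lemma phi_mul_le {U S : Finset V} (hU : U.Nonempty)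
    (hint : ((U \ vbdry G U).card : ℝ) ≤ (Fintype.card V : ℝ) / 2)
    (hbd : vbdry G U ⊆ S) :
    phi G * U.card ≤ (S.card : ℝ) := by
  have h1 := phi_le (G := G) hU hint
  have h2 : (0:ℝ) < U.card := by exact_mod_cast Finset.card_pos.mpr hU
  have h3 : ((vbdry G U).card : ℝ) ≤ S.card := by
    exact_mod_cast Finset.card_le_card hbd
  have := (le_div_iff₀ h2).1 h1
  linarith

lemma phi_le_one (G : SimpleGraph V) (hn : 2 ≤ Fintype.card V) : phi G ≤ 1 := by
  have : Nonempty V := Fintype.card_pos_iff.mp (by omega)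
  obtain ⟨v⟩ := this
  have h1 : (({v} : Finset V) \ vbdry G {v}).card ≤ 1 := by
    calc _ ≤ ({v} : Finset V).card := Finset.card_le_card (Finset.sdiff_subset)
    _ = 1 := Finset.card_singleton v
  have h2 : ((({v} : Finset V) \ vbdry G {v}).card : ℝ) ≤ (Fintype.card V : ℝ) / 2 := by
    have ha : (2:ℝ) ≤ Fintype.card V := by exact_mod_cast hn
    have hb : ((({v} : Finset V) \ vbdry G {v}).card : ℝ) ≤ 1 := by exact_mod_cast h1
    linarith
  have hle := phi_le (G := G) (Finset.singleton_nonempty v) h2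
  have hb : (vbdry G {v}).card ≤ 1 := by
    calc _ ≤ ({v} : Finset V).card := Finset.card_le_card (Finset.filter_subset _ _)
    _ = 1 := Finset.card_singleton v
  have hb' : ((vbdry G {v}).card : ℝ) ≤ 1 := by exact_mod_cast hb
  rw [Finset.card_singleton] at hle
  simpa using hle.trans (by simpa using hb')

lemma phi_eq_zero (G : SimpleGraph V) (hn : Fintype.card V ≤ 1) : phi G = 0 := by
  have hset : { r | ∃ U : Finset V, U.Nonempty ∧
      ((U \ vbdry G U).card : ℝ) ≤ (Fintype.card V : ℝ) / 2 ∧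
      r = ((vbdry G U).card : ℝ) / (U.card : ℝ) } = ∅ := by
    ext r
    simp only [Set.mem_setOf_eq, Set.mem_empty_iff_false, iff_false, not_exists]
    rintro U ⟨hU, hint, rfl⟩
    have h1 : 1 ≤ U.card := Finset.card_pos.mpr hU
    have h2 : U.card ≤ Fintype.card V := Finset.card_le_univ U
    have hc : Fintype.card V = 1 := by omega
    have hb : vbdry G U = ∅ := by
      apply Finset.filter_eq_empty_iff.mpr
      intro v hv
      rintro ⟨u, hu, hadj⟩
      have : U = Finset.univ := Finset.eq_univ_of_card U (by omega)
      exact hu (this ▸ Finset.mem_univ u)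
    rw [hb, Finset.sdiff_empty] at hint
    have hUc : U.card = 1 := by omega
    rw [hUc, hc] at hint
    norm_num at hint
  rw [phi, hset, Real.sInf_empty]

lemma vbdry_union_subset {A B S : Finset V} (hcover : A ∪ B = Finset.univ)
    (hE : ∀ a ∈ A \ S, ∀ b ∈ B \ S, ¬ G.Adj a b) : vbdry G (A ∪ S) ⊆ S := by
  intro v hv
  rw [vbdry, Finset.mem_filter] at hv
  obtain ⟨hvU, u, hu, hadj⟩ := hv
  by_contra hvS
  have hvA : v ∈ A \ S := by
    rw [Finset.mem_sdiff]
    rw [Finset.mem_union] at hvU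
    exact ⟨hvU.resolve_right hvS, hvS⟩
  have huB : u ∈ B \ S := by
    rw [Finset.mem_sdiff]
    rw [Finset.mem_union, not_or] at hu
    have : u ∈ A ∪ B := hcover ▸ Finset.mem_univ u
    rw [Finset.mem_union] at this
    exact ⟨this.resolve_left hu.1, hu.2⟩
  exact hE v hvA u huB hadj

lemma vbdry_sdiff_subset (U : Finset V) :
    vbdry G (Finset.univ \ (U \ vbdry G U)) ⊆ vbdry G U := by
  intro v hv
  rw [vbdry, Finset.mem_filter] at hv
  obtain ⟨hvW, u, hu, hadj⟩ := hv
  have hu' : u ∈ U \ vbdry G U := by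
    by_contra h
    exact hu (Finset.mem_sdiff.mpr ⟨Finset.mem_univ u, h⟩)
  rw [Finset.mem_sdiff] at hu'
  obtain ⟨huU, hub⟩ := hu'
  have hvU : v ∈ U := by
    by_contra h
    exact hub (Finset.mem_filter.mpr ⟨huU, v, h, hadj.symm⟩)
  have hv2 : v ∉ U \ vbdry G U := (Finset.mem_sdiff.mp hvW).2
  rw [Finset.mem_sdiff, not_and_or, not_not] at hv2
  exact hv2.resolve_left (fun h => h hvU)

end AuxLemmas

set_option maxHeartbeats 1600000 in
theorem stmt0 {V : Type*} [Fintype V] (G : SimpleGraph V)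
    (A B S : Finset V) (hcover : A ∪ B = Finset.univ) (hdisj : Disjoint A B)
    (hE : ∀ a ∈ A \ S, ∀ b ∈ B \ S, ¬ G.Adj a b) :
    phi G * ((A.card : ℝ) * (B.card : ℝ)) / (Fintype.card V : ℝ) ≤ (S.card : ℝ) := by
  rcases le_or_gt (Fintype.card V) 1 with hn1 | hn1
  · rw [phi_eq_zero G hn1]
    simp
  · have hn2 : 2 ≤ Fintype.card V := hn1
    have hnR : (0:ℝ) < Fintype.card V := by
      have : (0:ℕ) < Fintype.card V := by omega
      exact_mod_cast this
    rw [div_le_iff₀ hnR]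
    have hphi0 := phi_nonneg G
    have hphi1 := phi_le_one G hn2
    have hab : (A.card:ℝ) + B.card = Fintype.card V := by
      have : A.card + B.card = Fintype.card V := by
        rw [← Finset.card_union_of_disjoint hdisj, hcover, Finset.card_univ]
      exact_mod_cast this
    have hs0 : (0:ℝ) ≤ S.card := by positivity
    have ha0 : (0:ℝ) ≤ A.card := by positivity
    have hb0 : (0:ℝ) ≤ B.card := by positivity
    have h4ab : 4 * ((A.card:ℝ) * B.card) ≤ (Fintype.card V:ℝ)^2 := by
      nlinarith [sq_nonneg ((A.card:ℝ) - B.card)]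
    rcases lt_or_ge ((Fintype.card V:ℝ)) (2 * S.card) with hs | hs
    · nlinarith [mul_le_mul_of_nonneg_right hphi1 (mul_nonneg ha0 hb0)]
    · by_cases hBS : B ⊆ S
      · have hbs : (B.card:ℝ) ≤ S.card := by exact_mod_cast Finset.card_le_card hBS
        nlinarith [mul_le_mul_of_nonneg_right hphi1 (mul_nonneg ha0 hb0)]
      · by_cases hAS : A ⊆ S
        · have has : (A.card:ℝ) ≤ S.card := by exact_mod_cast Finset.card_le_card hAS
          nlinarith [mul_le_mul_of_nonneg_right hphi1 (mul_nonneg ha0 hb0)]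
        · obtain ⟨x, hxB, hxS⟩ := Finset.not_subset.mp hBS
          obtain ⟨y, hyA, hyS⟩ := Finset.not_subset.mp hAS
          have hbU : vbdry G (A ∪ S) ⊆ S := vbdry_union_subset hcover hE
          have hbU' : vbdry G (B ∪ S) ⊆ S :=
            vbdry_union_subset (A := B) (B := A)
              (by rw [Finset.union_comm]; exact hcover)
              (fun b hb a ha h => hE a ha b hb h.symm)
          have hUne : (A ∪ S).Nonempty := ⟨y, Finset.mem_union_left _ hyA⟩
          have hU'ne : (B ∪ S).Nonempty := ⟨x, Finset.mem_union_left _ hxB⟩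
          have haU : (A.card:ℝ) ≤ (A ∪ S).card := by
            exact_mod_cast Finset.card_le_card Finset.subset_union_left
          have hbU'c : (B.card:ℝ) ≤ (B ∪ S).card := by
            exact_mod_cast Finset.card_le_card Finset.subset_union_left
          rcases le_or_gt (((A ∪ S) \ vbdry G (A ∪ S)).card : ℝ) ((Fintype.card V:ℝ)/2)
            with hc1 | hc1
          · have hkey := phi_mul_le hUne hc1 hbU
            have : phi G * A.card ≤ S.card := by
              nlinarith [mul_le_mul_of_nonneg_left haU hphi0]
            nlinarith [mul_le_mul_of_nonneg_right this hb0]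
          · rcases le_or_gt (((B ∪ S) \ vbdry G (B ∪ S)).card : ℝ) ((Fintype.card V:ℝ)/2)
              with hc2 | hc2
            · have hkey := phi_mul_le hU'ne hc2 hbU'
              have : phi G * B.card ≤ S.card := by
                nlinarith [mul_le_mul_of_nonneg_left hbU'c hphi0]
              nlinarith [mul_le_mul_of_nonneg_right this ha0]
            · -- both interiors large: use complements of interiors
              have hWb : vbdry G (Finset.univ \ ((A ∪ S) \ vbdry G (A ∪ S))) ⊆ S :=
                (vbdry_sdiff_subset (A ∪ S)).trans hbU
              have hW'b : vbdry G (Finset.univ \ ((B ∪ S) \ vbdry G (B ∪ S))) ⊆ S :=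
                (vbdry_sdiff_subset (B ∪ S)).trans hbU'
              have hxU : x ∉ A ∪ S := by
                rw [Finset.mem_union, not_or]
                exact ⟨fun h => (Finset.disjoint_left.mp hdisj h) hxB, hxS⟩
              have hyU' : y ∉ B ∪ S := by
                rw [Finset.mem_union, not_or]
                exact ⟨fun h => (Finset.disjoint_left.mp hdisj hyA) h, hyS⟩
              have hWne : (Finset.univ \ ((A ∪ S) \ vbdry G (A ∪ S))).Nonempty :=
                ⟨x, Finset.mem_sdiff.mpr ⟨Finset.mem_univ x,
                  fun h => hxU (Finset.mem_sdiff.mp h).1⟩⟩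
              have hW'ne : (Finset.univ \ ((B ∪ S) \ vbdry G (B ∪ S))).Nonempty :=
                ⟨y, Finset.mem_sdiff.mpr ⟨Finset.mem_univ y,
                  fun h => hyU' (Finset.mem_sdiff.mp h).1⟩⟩
              have hcardW : ((Finset.univ \ ((A ∪ S) \ vbdry G (A ∪ S))).card:ℝ)
                  = Fintype.card V - ((A ∪ S) \ vbdry G (A ∪ S)).card := by
                rw [Finset.card_sdiff_of_subset (Finset.subset_univ _), Finset.card_univ,
                  Nat.cast_sub (Finset.card_le_univ _)]
              have hcardW' : ((Finset.univ \ ((B ∪ S) \ vbdry G (B ∪ S))).card:ℝ)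
                  = Fintype.card V - ((B ∪ S) \ vbdry G (B ∪ S)).card := by
                rw [Finset.card_sdiff_of_subset (Finset.subset_univ _), Finset.card_univ,
                  Nat.cast_sub (Finset.card_le_univ _)]
              have hintW : (((Finset.univ \ ((A ∪ S) \ vbdry G (A ∪ S))) \
                  vbdry G (Finset.univ \ ((A ∪ S) \ vbdry G (A ∪ S)))).card : ℝ)
                  ≤ (Fintype.card V:ℝ)/2 := by
                have h1 : (((Finset.univ \ ((A ∪ S) \ vbdry G (A ∪ S))) \
                    vbdry G (Finset.univ \ ((A ∪ S) \ vbdry G (A ∪ S)))).card : ℝ)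
                    ≤ ((Finset.univ \ ((A ∪ S) \ vbdry G (A ∪ S))).card:ℝ) := by
                  exact_mod_cast Finset.card_le_card Finset.sdiff_subset
                rw [hcardW] at h1
                linarith
              have hintW' : (((Finset.univ \ ((B ∪ S) \ vbdry G (B ∪ S))) \
                  vbdry G (Finset.univ \ ((B ∪ S) \ vbdry G (B ∪ S)))).card : ℝ)
                  ≤ (Fintype.card V:ℝ)/2 := by
                have h1 : (((Finset.univ \ ((B ∪ S) \ vbdry G (B ∪ S))) \
                    vbdry G (Finset.univ \ ((B ∪ S) \ vbdry G (B ∪ S)))).card : ℝ)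
                    ≤ ((Finset.univ \ ((B ∪ S) \ vbdry G (B ∪ S))).card:ℝ) := by
                  exact_mod_cast Finset.card_le_card Finset.sdiff_subset
                rw [hcardW'] at h1
                linarith
              have hpW := phi_mul_le hWne hintW hWb
              have hpW' := phi_mul_le hW'ne hintW' hW'b
              rw [hcardW] at hpW
              rw [hcardW'] at hpW'
              have hinter : ((A ∪ S) \ vbdry G (A ∪ S)) ∩ ((B ∪ S) \ vbdry G (B ∪ S)) ⊆ S := by
                intro v hv
                rw [Finset.mem_inter, Finset.mem_sdiff, Finset.mem_sdiff] at hv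
                obtain ⟨⟨hv1, _⟩, ⟨hv2, _⟩⟩ := hv
                rw [Finset.mem_union] at hv1 hv2
                rcases hv1 with h | h
                · rcases hv2 with h' | h'
                  · exact absurd h' (Finset.disjoint_left.mp hdisj h)
                  · exact h'
                · exact h
              have hcardsum : (((A ∪ S) \ vbdry G (A ∪ S)).card : ℝ)
                  + ((B ∪ S) \ vbdry G (B ∪ S)).card ≤ (Fintype.card V:ℝ) + S.card := by
                have h1 := Finset.card_union_add_card_inter
                  ((A ∪ S) \ vbdry G (A ∪ S)) ((B ∪ S) \ vbdry G (B ∪ S))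
                have h2 : (((A ∪ S) \ vbdry G (A ∪ S)) ∪ ((B ∪ S) \ vbdry G (B ∪ S))).card
                    ≤ Fintype.card V := Finset.card_le_univ _
                have h3 : (((A ∪ S) \ vbdry G (A ∪ S)) ∩ ((B ∪ S) \ vbdry G (B ∪ S))).card
                    ≤ S.card := Finset.card_le_card hinter
                have : ((A ∪ S) \ vbdry G (A ∪ S)).card + ((B ∪ S) \ vbdry G (B ∪ S)).card
                    ≤ Fintype.card V + S.card := by omega
                exact_mod_cast this
              -- now: phi*(n-u) ≤ s, phi*(n-u') ≤ s, u+u' ≤ n+s ⇒ phi*n ≤ 3s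
              have h3s : phi G * (Fintype.card V:ℝ) ≤ 3 * S.card := by
                nlinarith [mul_le_mul_of_nonneg_left hcardsum hphi0]
              nlinarith [mul_le_mul_of_nonneg_right h3s hnR.le,
                mul_le_mul_of_nonneg_left h4ab hphi0]


end
end

section
/- For every finite connected graph G, the L¹-extremal observable spread satisfies csobs(G) ≤ 2/φ_G, i.e., (1/2)·csobs(G) ≤ 1/φ_G. -/
/-!
Write `g = f + ω/2` and `h = f - ω/2`. If `f` is 1-Lipschitz for `distw G ω`, then `h v ≤ g u`
along every edge. For a threshold `t`, the sets `A = {g > t}` and `D = {h ≤ t}` cover the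
vertices and each contains the vertex boundary of the other, so vertex expansion gives
`φ |A| |D| ≤ n |A ∩ D|`. Integrating over `t` turns the left side into
`φ ∑ₓ∑ᵧ (g x - h y)⁺ ≥ (φ/2) ∑ₓ∑ᵧ |f x - f y|` and the right side into `n ∑ ω ≤ n²`.
-/

open Finset MeasureTheory Classical

noncomputable section

section LayerCake

variable {ι : Type*} [Fintype ι] (a b : ι → ℝ)

lemma natCast_card_filter_mem_Ico_eq_sum_indicator (t : ℝ) :
    (#{i | t ∈ Set.Ico (a i) (b i)} : ℝ) =
      ∑ i, (Set.Ico (a i) (b i)).indicator (fun _ => (1 : ℝ)) t := by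
  simp only [natCast_card_filter, Set.indicator_apply]

lemma integrable_indicator_Ico_one (a b : ℝ) :
    Integrable ((Set.Ico a b).indicator fun _ => (1 : ℝ)) :=
  (integrable_indicator_iff measurableSet_Ico).2 (integrableOn_const (by simp))

lemma integrable_card_filter_mem_Ico :
    Integrable fun t => (#{i | t ∈ Set.Ico (a i) (b i)} : ℝ) := by
  simp only [natCast_card_filter_mem_Ico_eq_sum_indicator]
  exact integrable_finsetSum _ fun i _ => integrable_indicator_Ico_one _ _

lemma integral_card_filter_mem_Ico :
    ∫ t, (#{i | t ∈ Set.Ico (a i) (b i)} : ℝ) = ∑ i, max (b i - a i) 0 := by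
  simp only [natCast_card_filter_mem_Ico_eq_sum_indicator]
  rw [integral_finsetSum _ fun i _ => integrable_indicator_Ico_one _ _]
  refine sum_congr rfl fun i _ => ?_
  rw [integral_indicator_const _ measurableSet_Ico, measureReal_def, Real.volume_Ico,
    ENNReal.toReal_ofReal', smul_eq_mul, mul_one]

end LayerCake

namespace SimpleGraph

variable {V : Type*} (G : SimpleGraph V)

lemma wlen_nonneg {ω : V → ℝ} (hω : ∀ v, 0 ≤ ω v) {u v : V} (w : G.Walk u v) :
    0 ≤ wlen ω w :=
  List.sum_nonneg fun x hx => by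
    obtain ⟨d, -, rfl⟩ := List.mem_map.1 hx
    linarith [hω d.fst, hω d.snd]

lemma distw_le_of_adj {ω : V → ℝ} (hω : ∀ v, 0 ≤ ω v) {u v : V} (huv : G.Adj u v) :
    distw G ω u v ≤ (ω u + ω v) / 2 :=
  csInf_le ⟨0, by rintro x ⟨w, rfl⟩; exact G.wlen_nonneg hω w⟩ ⟨.cons huv .nil, by simp [wlen]⟩

variable [Fintype V]

lemma vbdry_subset (U : Finset V) : vbdry G U ⊆ U := filter_subset _ _

lemma vbdry_univ : vbdry G univ = ∅ := by
  simp [vbdry]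

lemma phi_nonneg : 0 ≤ phi G :=
  Real.sInf_nonneg <| by
    rintro r ⟨U, -, -, rfl⟩
    positivity

lemma phi_mul_card_le_card_vbdry {U : Finset V}
    (hU : (#(U \ vbdry G U) : ℝ) ≤ Fintype.card V / 2) :
    phi G * #U ≤ #(vbdry G U) := by
  obtain rfl | hne := U.eq_empty_or_nonempty
  · simp
  have hbdd : BddBelow { r | ∃ U : Finset V, U.Nonempty ∧
      ((U \ vbdry G U).card : ℝ) ≤ (Fintype.card V : ℝ) / 2 ∧
      r = ((vbdry G U).card : ℝ) / (U.card : ℝ) } := by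
    refine ⟨0, ?_⟩
    rintro r ⟨U, -, -, rfl⟩
    positivity
  rw [← le_div_iff₀ (by simpa using hne)]
  exact csInf_le hbdd ⟨U, hne, hU, rfl⟩

lemma card_sdiff_vbdry_singleton_le (hn : 2 ≤ Fintype.card V) (v : V) :
    (#({v} \ vbdry G {v}) : ℝ) ≤ Fintype.card V / 2 := by
  have : #({v} \ vbdry G {v}) ≤ 1 := (card_le_card sdiff_subset).trans_eq (card_singleton v)
  rw [le_div_iff₀ two_pos]
  exact_mod_cast (by omega : #({v} \ vbdry G {v}) * 2 ≤ Fintype.card V)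

lemma phi_le_one (hn : 2 ≤ Fintype.card V) : phi G ≤ 1 := by
  obtain ⟨v⟩ : Nonempty V := Fintype.card_pos_iff.1 (by omega)
  calc phi G = phi G * #({v} : Finset V) := by simp
    _ ≤ #(vbdry G {v}) := phi_mul_card_le_card_vbdry G (card_sdiff_vbdry_singleton_le G hn v)
    _ ≤ 1 := by exact_mod_cast (card_le_card (vbdry_subset G _)).trans_eq (card_singleton v)

lemma vbdry_compl_sdiff_subset {D : Finset V} : vbdry G (D \ vbdry G D)ᶜ ⊆ vbdry G D := by
  intro v hv
  obtain ⟨hvU, u, huU, hadj⟩ := mem_filter.1 hv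
  rw [mem_compl, not_not, mem_sdiff] at huU
  by_cases hvD : v ∈ D
  · by_contra hvB
    exact mem_compl.1 hvU (mem_sdiff.2 ⟨hvD, hvB⟩)
  · exact absurd (mem_filter.2 ⟨huU.1, v, hvD, hadj.symm⟩) huU.2

/- Either `D` itself is admissible in the definition of `phi`, or the complement of its interior
`D \ vbdry G D` is. -/
lemma phi_mul_card_le_card_inter (hn : 2 ≤ Fintype.card V) {A D : Finset V}
    (hcover : A ∪ D = univ) (hD : vbdry G D ⊆ A) (hle : #A ≤ #D) :
    phi G * #A ≤ #(A ∩ D) := by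
  set B := vbdry G D
  have hBD : B ⊆ D := vbdry_subset G D
  have hB : (#B : ℝ) ≤ #(A ∩ D) := by exact_mod_cast card_le_card (subset_inter hD hBD)
  have hφ₀ := phi_nonneg G
  by_cases hI : (#(D \ B) : ℝ) ≤ Fintype.card V / 2
  · calc phi G * #A ≤ phi G * #D := by gcongr
      _ ≤ #B := phi_mul_card_le_card_vbdry G hI
      _ ≤ #(A ∩ D) := hB
  set U := (D \ B)ᶜ
  have hAD : (Fintype.card V : ℝ) + #(A ∩ D) = #A + #D := by
    have := card_union_add_card_inter A D
    rw [hcover, card_univ] at this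
    exact_mod_cast this
  have hIB : (#(D \ B) : ℝ) + #B = #D := by exact_mod_cast card_sdiff_add_card_eq_card hBD
  have hUI : (#U : ℝ) + #(D \ B) = Fintype.card V := by exact_mod_cast card_compl_add_card _
  have hU : (#(U \ vbdry G U) : ℝ) ≤ Fintype.card V / 2 := by
    have : (#(U \ vbdry G U) : ℝ) ≤ #U := by exact_mod_cast card_le_card sdiff_subset
    linarith
  have hφU : phi G * #U ≤ #B := (phi_mul_card_le_card_vbdry G hU).trans
    (by exact_mod_cast card_le_card (vbdry_compl_sdiff_subset G))
  nlinarith [phi_le_one G hn]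

lemma phi_mul_card_mul_card_le (hn : 2 ≤ Fintype.card V) {A D : Finset V}
    (hcover : A ∪ D = univ) (hA : vbdry G A ⊆ D) (hD : vbdry G D ⊆ A) :
    phi G * (#A * #D) ≤ Fintype.card V * #(A ∩ D) := by
  have hφ₀ := phi_nonneg G
  rcases le_total #A #D with h | h
  · have := phi_mul_card_le_card_inter G hn hcover hD h
    have : (#D : ℝ) ≤ Fintype.card V := by exact_mod_cast card_le_univ D
    nlinarith
  · have hDA := phi_mul_card_le_card_inter G hn (union_comm A D ▸ hcover) hA h
    rw [inter_comm] at hDA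
    have : (#A : ℝ) ≤ Fintype.card V := by exact_mod_cast card_le_univ A
    nlinarith

lemma phi_mul_card_filter_mem_Ico_le (hn : 2 ≤ Fintype.card V) {g h : V → ℝ}
    (hgh : ∀ v, h v ≤ g v) (hedge : ∀ u v, G.Adj u v → h v ≤ g u) (t : ℝ) :
    phi G * #{p : V × V | t ∈ Set.Ico (h p.2) (g p.1)} ≤
      Fintype.card V * #{v | t ∈ Set.Ico (h v) (g v)} := by
  set A : Finset V := {x | t < g x}
  set D : Finset V := {y | h y ≤ t}
  have hpairs : #{p : V × V | t ∈ Set.Ico (h p.2) (g p.1)} = #A * #D := by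
    rw [← card_product, ← filter_product, univ_product_univ]
    simp only [Set.mem_Ico, and_comm]
  have hdiag : ({v | t ∈ Set.Ico (h v) (g v)} : Finset V) = A ∩ D := by
    ext v
    simp [A, D, and_comm]
  have hcover : A ∪ D = univ := eq_univ_of_forall fun v => by
    by_cases hv : t < g v
    · exact mem_union_left _ (by simpa [A] using hv)
    · exact mem_union_right _ (by simpa [D] using (hgh v).trans (not_lt.1 hv))
  have hA : vbdry G A ⊆ D := by
    intro v hv
    obtain ⟨hvA, u, huA, hadj⟩ := mem_filter.1 hv
    simp only [A, D, mem_filter, mem_univ, true_and, not_lt] at hvA huA ⊢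
    exact (hedge u v hadj.symm).trans huA
  have hD : vbdry G D ⊆ A := by
    intro v hv
    obtain ⟨hvD, u, huD, hadj⟩ := mem_filter.1 hv
    simp only [A, D, mem_filter, mem_univ, true_and, not_le] at hvD huD ⊢
    exact huD.trans_le (hedge v u hadj)
  rw [hpairs, hdiag]
  exact_mod_cast phi_mul_card_mul_card_le G hn hcover hA hD

lemma phi_mul_sum_sum_max_sub_le (hn : 2 ≤ Fintype.card V) {g h : V → ℝ}
    (hgh : ∀ v, h v ≤ g v) (hedge : ∀ u v, G.Adj u v → h v ≤ g u) :
    phi G * ∑ x, ∑ y, max (g x - h y) 0 ≤ Fintype.card V * ∑ v, (g v - h v) := by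
  have key := integral_mono ((integrable_card_filter_mem_Ico _ _).const_mul (phi G))
    ((integrable_card_filter_mem_Ico _ _).const_mul (Fintype.card V : ℝ))
    (phi_mul_card_filter_mem_Ico_le G hn hgh hedge)
  simp only [integral_const_mul, integral_card_filter_mem_Ico, Fintype.sum_prod_type] at key
  simpa only [max_eq_left (sub_nonneg.2 (hgh _))] using key

lemma phi_mul_sum_sum_abs_sub_le (hn : 2 ≤ Fintype.card V) {ω f : V → ℝ}
    (hω : ∀ v, 0 ≤ ω v) (hf : ∀ u v, G.Adj u v → f u - f v ≤ (ω u + ω v) / 2) :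
    phi G * ∑ x, ∑ y, |f x - f y| ≤ 2 * Fintype.card V * ∑ v, ω v := by
  obtain ⟨g, hg⟩ : ∃ g : V → ℝ, ∀ x, g x = f x + ω x / 2 := ⟨_, fun _ => rfl⟩
  obtain ⟨h, hh⟩ : ∃ h : V → ℝ, ∀ x, h x = f x - ω x / 2 := ⟨_, fun _ => rfl⟩
  have key := phi_mul_sum_sum_max_sub_le G hn (g := g) (h := h)
    (fun v => by linarith [hω v, hg v, hh v])
    (fun u v huv => by linarith [hf v u huv.symm, hg u, hh v])
  have habs : ∀ x y, |f x - f y| ≤ max (g x - h y) 0 + max (g y - h x) 0 := fun x y => by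
    rw [abs_sub_le_iff]
    constructor <;> linarith [hω x, hω y, hg x, hg y, hh x, hh y, le_max_left (g x - h y) 0,
      le_max_left (g y - h x) 0, le_max_right (g x - h y) 0, le_max_right (g y - h x) 0]
  have hsum : ∑ x, ∑ y, |f x - f y| ≤ 2 * ∑ x, ∑ y, max (g x - h y) 0 := by
    calc ∑ x, ∑ y, |f x - f y|
        ≤ ∑ x, ∑ y, (max (g x - h y) 0 + max (g y - h x) 0) := by
          gcongr with x _ y _
          exact habs x y
      _ = 2 * ∑ x, ∑ y, max (g x - h y) 0 := by
        simp only [sum_add_distrib]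
        rw [sum_comm (f := fun x y => max (g y - h x) 0)]
        ring
  have hgh : ∑ v, (g v - h v) = ∑ v, ω v := sum_congr rfl fun v _ => by rw [hg, hh]; ring
  rw [hgh] at key
  nlinarith [phi_nonneg G]

lemma csobs_le [Nonempty V] {c : ℝ} (hc : 0 ≤ c)
    (h : ∀ ω : V → ℝ, (∀ v, 0 ≤ ω v) → ∀ f : V → ℝ, (∀ x y, |f x - f y| ≤ distw G ω x y) →
      ∑ x, ∑ y, |f x - f y| ≤ c * Fintype.card V * ∑ v, ω v) :
    csobs G ≤ c := by
  refine Real.sSup_le ?_ hc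
  rintro s ⟨ω, hω, havg, rfl⟩
  refine Real.sSup_le ?_ hc
  rintro s ⟨f, hf, rfl⟩
  have hn : (0 : ℝ) < Fintype.card V := by exact_mod_cast Fintype.card_pos
  rw [div_le_iff₀ (by positivity)]
  calc ∑ x, ∑ y, |f x - f y| ≤ c * Fintype.card V * ∑ v, ω v := h ω hω f hf
    _ ≤ c * Fintype.card V * Fintype.card V := by gcongr; exact (div_le_one hn).1 havg
    _ = c * (Fintype.card V : ℝ) ^ 2 := by ring

variable {G}

lemma Connected.vbdry_nonempty (hG : G.Connected) {U : Finset V} (hU : U.Nonempty)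
    (hU' : U ≠ univ) : (vbdry G U).Nonempty := by
  obtain ⟨u, hu⟩ := hU
  obtain ⟨v, hv⟩ : ∃ v, v ∉ U := by
    by_contra! h
    exact hU' (eq_univ_of_forall h)
  obtain ⟨d, -, hd₁, hd₂⟩ := (hG.preconnected u v).some.exists_boundary_dart (U : Set V) hu hv
  exact ⟨d.fst, mem_filter.2 ⟨hd₁, d.snd, hd₂, d.adj⟩⟩

lemma Connected.phi_pos (hG : G.Connected) (hn : 2 ≤ Fintype.card V) : 0 < phi G := by
  have hcard : (0 : ℝ) < Fintype.card V := by exact_mod_cast (by omega : 0 < Fintype.card V)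
  obtain ⟨v⟩ := hG.nonempty
  refine (one_div_pos.2 hcard).trans_le (le_csInf ⟨_, {v}, singleton_nonempty v,
    card_sdiff_vbdry_singleton_le G hn v, rfl⟩ ?_)
  rintro r ⟨U, hU, hhalf, rfl⟩
  have hU' : U ≠ univ := by
    rintro rfl
    simp only [vbdry_univ, sdiff_empty, card_univ] at hhalf
    linarith
  have h1 : (1 : ℝ) ≤ #(vbdry G U) := by exact_mod_cast (hG.vbdry_nonempty hU hU').card_pos
  have h2 : (#U : ℝ) ≤ Fintype.card V := by exact_mod_cast card_le_univ U
  have h3 : (0 : ℝ) < #U := by exact_mod_cast hU.card_pos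
  rw [div_le_div_iff₀ hcard h3]
  nlinarith

end SimpleGraph

theorem stmt2 {V : Type*} [Fintype V] (G : SimpleGraph V) (hG : G.Connected) :
    (1 / 2) * csobs G ≤ 1 / phi G := by
  have : Nonempty V := hG.nonempty
  rcases subsingleton_or_nontrivial V with hV | hV
  -- On one vertex `phi G = sInf ∅ = 0`, so `1 / phi G` is the junk value `0`; `csobs G` vanishes too.
  · have hcsobs : csobs G ≤ 0 := G.csobs_le le_rfl fun ω _ f _ => by
      simp [Subsingleton.elim _ (Classical.arbitrary V)]
    have : 0 ≤ 1 / phi G := one_div_nonneg.2 G.phi_nonneg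
    linarith
  · have hn : 2 ≤ Fintype.card V := Fintype.one_lt_card
    have hφ : 0 < phi G := hG.phi_pos hn
    have hcsobs : csobs G ≤ 2 / phi G := G.csobs_le (by positivity) fun ω hω f hf => by
      have := G.phi_mul_sum_sum_abs_sub_le hn hω fun u v huv =>
        (le_abs_self _).trans ((hf u v).trans (G.distw_le_of_adj hω huv))
      rw [div_mul_eq_mul_div, div_mul_eq_mul_div, le_div_iff₀ hφ]
      linarith
    calc (1 / 2) * csobs G ≤ (1 / 2) * (2 / phi G) := by gcongr
      _ = 1 / phi G := by ring

end
end

section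
/- Let (X,d) be a finite metric space with spread s = (1/|X|²)·Σ_{x,y} d(x,y). If there exists x₀ ∈ X with |B_d(x₀, s/4)| ≥ |X|/2, then the observable spread satisfies sobs(X,d) ≥ s/4. -/
open Finset MeasureTheory

noncomputable section

/-- A random partition (over a probability space `(Ω, μ)`) is `(α, Δ)`-padded. -/
def IsPaddedPartition {X : Type*} [Fintype X] [DecidableEq X] (d : X → X → ℝ)
    {Ω : Type*} [MeasurableSpace Ω] (μ : Measure Ω)
    (P : Ω → Finpartition (Finset.univ : Finset X)) (α Δ : ℝ) : Prop :=
  (∀ᵐ o ∂μ, ∀ t ∈ (P o).parts, ∀ x ∈ t, ∀ y ∈ t, d x y ≤ Δ) ∧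
  ∀ x : X, (1 / 2 : ℝ) ≤
    (μ {o | ∀ t ∈ (P o).parts, x ∈ t → ∀ y : X, d x y ≤ Δ / α → y ∈ t}).toReal

theorem stmt3 {X : Type*} [Fintype X] [MetricSpace X]
    (x₀ : X)
    (hball : (Fintype.card X : ℝ) / 2 ≤
      (({y : X | dist x₀ y ≤ spread (fun x y : X => dist x y) / 4} : Set X).ncard : ℝ)) :
    spread (fun x y : X => dist x y) / 4 ≤ sobs (fun x y : X => dist x y) := by
  classical
  set s : ℝ := spread (fun x y : X => dist x y) with hs
  set f : X → ℝ := fun y => dist y x₀ with hf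
  have hLip : ∀ x y : X, |f x - f y| ≤ dist x y := fun x y => abs_dist_sub_le x y x₀
  -- the set is bounded above by s
  have hbdd : BddAbove { t | ∃ f : X → ℝ, (∀ x y, |f x - f y| ≤ dist x y) ∧
      t = (∑ x : X, ∑ y : X, |f x - f y|) / ((Fintype.card X : ℝ))^2 } := by
    refine ⟨s, ?_⟩
    rintro v ⟨g, hg, rfl⟩
    rw [hs, spread]
    rcases eq_or_lt_of_le (sq_nonneg ((Fintype.card X : ℝ))) with h0 | h0
    · rw [← h0, div_zero, div_zero]
    · exact (div_le_div_iff_of_pos_right h0).mpr <| Finset.sum_le_sum fun x _ =>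
        Finset.sum_le_sum fun y _ => hg x y
  have hmem : (∑ x : X, ∑ y : X, |f x - f y|) / ((Fintype.card X : ℝ))^2 ∈
      { t | ∃ f : X → ℝ, (∀ x y, |f x - f y| ≤ dist x y) ∧
      t = (∑ x : X, ∑ y : X, |f x - f y|) / ((Fintype.card X : ℝ))^2 } := ⟨f, hLip, rfl⟩
  have hkey : s / 4 ≤ (∑ x : X, ∑ y : X, |f x - f y|) / ((Fintype.card X : ℝ))^2 := by
    rcases Nat.eq_zero_or_pos (Fintype.card X) with h0 | h0
    · have hs0 : s = 0 := by
        rw [hs, spread, h0]; simp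
      rw [hs0, h0]; simp
    -- main case
    set n : ℝ := (Fintype.card X : ℝ) with hn
    have hnpos : (0 : ℝ) < n := by rw [hn]; exact_mod_cast h0
    have hn2 : (0 : ℝ) < n ^ 2 := by positivity
    have hs0 : 0 ≤ s := by
      rw [hs, spread]
      apply div_nonneg _ (sq_nonneg _)
      exact Finset.sum_nonneg fun x _ => Finset.sum_nonneg fun y _ => dist_nonneg
    set B : Finset X := Finset.univ.filter (fun y => dist x₀ y ≤ s / 4) with hB
    have hBset : ({y : X | dist x₀ y ≤ s / 4} : Set X) = ↑B := by
      ext y; simp [hB]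
    have hm : n / 2 ≤ (B.card : ℝ) := by
      rw [hBset, Set.ncard_coe_finset] at hball
      exact hball
    set m : ℝ := (B.card : ℝ) with hmdef
    have hm0 : 0 ≤ m := Nat.cast_nonneg _
    set F : ℝ := ∑ y : X, f y with hF
    set FB : ℝ := ∑ x ∈ B, f x with hFB
    -- spread bound : s * n^2 ≤ 2 * n * F
    have hSF : s * n ^ 2 ≤ 2 * n * F := by
      have h1 : s * n ^ 2 = ∑ x : X, ∑ y : X, dist x y := by
        rw [hs, spread, div_mul_cancel₀]
        exact ne_of_gt hn2
      have h2 : (∑ x : X, ∑ y : X, dist x y) ≤ ∑ x : X, ∑ y : X, (f x + f y) := by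
        refine Finset.sum_le_sum fun x _ => Finset.sum_le_sum fun y _ => ?_
        exact dist_triangle_right x y x₀
      have h3 : (∑ x : X, ∑ y : X, (f x + f y)) = 2 * n * F := by
        simp only [Finset.sum_add_distrib, Finset.sum_const, Finset.card_univ,
          nsmul_eq_mul, ← Finset.sum_mul, ← Finset.mul_sum]
        rw [← hF, ← hn]
        ring
      rw [h1]; linarith
    -- f is small on B
    have hfB : FB ≤ m * (s / 4) := by
      rw [hFB, hmdef, ← nsmul_eq_mul, ← Finset.sum_const]
      refine Finset.sum_le_sum fun x hx => ?_
      have := (Finset.mem_filter.mp hx).2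
      rw [hf]; rw [dist_comm] at this; exact this
    -- lower bound the double sum
    have hTlow : 2 * (m * F - n * FB) ≤ ∑ x : X, ∑ y : X, |f x - f y| := by
      have hsplit : (∑ x : X, ∑ y : X, |f x - f y|) =
          (∑ x ∈ B, ∑ y : X, |f x - f y|) +
          (∑ x ∈ Finset.univ.filter (fun y => ¬ dist x₀ y ≤ s / 4), ∑ y : X, |f x - f y|) := by
        rw [Finset.sum_filter_add_sum_filter_not]
      have h1 : (∑ x ∈ B, ∑ y : X, (f y - f x)) ≤ ∑ x ∈ B, ∑ y : X, |f x - f y| := by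
        refine Finset.sum_le_sum fun x _ => Finset.sum_le_sum fun y _ => ?_
        rw [abs_sub_comm]; exact le_abs_self _
      have h2 : (∑ x ∈ Finset.univ.filter (fun y => ¬ dist x₀ y ≤ s / 4), ∑ y ∈ B, (f x - f y)) ≤
          ∑ x ∈ Finset.univ.filter (fun y => ¬ dist x₀ y ≤ s / 4), ∑ y : X, |f x - f y| := by
        refine Finset.sum_le_sum fun x _ => ?_
        calc (∑ y ∈ B, (f x - f y)) ≤ ∑ y ∈ B, |f x - f y| :=
              Finset.sum_le_sum fun y _ => le_abs_self _
          _ ≤ ∑ y : X, |f x - f y| :=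
              Finset.sum_le_sum_of_subset_of_nonneg (Finset.subset_univ B)
                (fun y _ _ => abs_nonneg _)
      set C : Finset X := Finset.univ.filter (fun y => ¬ dist x₀ y ≤ s / 4) with hC
      have hFC : (∑ x ∈ C, f x) = F - FB := by
        have := Finset.sum_filter_add_sum_filter_not Finset.univ
          (fun y => dist x₀ y ≤ s / 4) f
        rw [← hB, ← hC, ← hF, ← hFB] at this
        linarith
      have hcC : (C.card : ℝ) = n - m := by
        have := Finset.card_filter_add_card_filter_not
          (s := (Finset.univ : Finset X)) (p := fun y => dist x₀ y ≤ s / 4)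
        rw [← hB, ← hC, Finset.card_univ] at this
        have h' : ((B.card + C.card : ℕ) : ℝ) = n := by rw [this, hn]
        push_cast at h'
        linarith
      have e1 : (∑ x ∈ B, ∑ y : X, (f y - f x)) = m * F - n * FB := by
        have inner : ∀ x : X, (∑ y : X, (f y - f x)) = F - n * f x := by
          intro x
          rw [Finset.sum_sub_distrib, Finset.sum_const, Finset.card_univ, nsmul_eq_mul, ← hF, ← hn]
        calc (∑ x ∈ B, ∑ y : X, (f y - f x)) = ∑ x ∈ B, (F - n * f x) :=
              Finset.sum_congr rfl (fun x _ => inner x)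
          _ = m * F - n * FB := by
              rw [Finset.sum_sub_distrib, Finset.sum_const, nsmul_eq_mul, ← Finset.mul_sum,
                ← hFB, ← hmdef]
      have e2 : (∑ x ∈ C, ∑ y ∈ B, (f x - f y)) = m * (F - FB) - (n - m) * FB := by
        have inner : ∀ x : X, (∑ y ∈ B, (f x - f y)) = m * f x - FB := by
          intro x
          rw [Finset.sum_sub_distrib, Finset.sum_const, nsmul_eq_mul, ← hFB, ← hmdef]
        calc (∑ x ∈ C, ∑ y ∈ B, (f x - f y)) = ∑ x ∈ C, (m * f x - FB) :=
              Finset.sum_congr rfl (fun x _ => inner x)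
          _ = m * (F - FB) - (n - m) * FB := by
              rw [Finset.sum_sub_distrib, ← Finset.mul_sum, hFC, Finset.sum_const, nsmul_eq_mul, hcC]
      rw [hsplit]
      nlinarith [h1, h2, e1, e2]
    -- conclude
    rw [le_div_iff₀ hn2]
    nlinarith [mul_le_mul_of_nonneg_left hSF hm0, mul_nonneg hs0 hnpos.le,
      mul_le_mul_of_nonneg_left hfB hnpos.le, mul_nonneg (mul_nonneg hs0 hnpos.le) hnpos.le]
  exact hkey.trans (le_csSup hbdd hmem)

end
end

section
/- Let (G,ω) be a conformal graph admitting an (α,Δ)-random separator. Then the metric space (V_G, dist_ω) admits an (8α, Δ)-padded random partition. -/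
open Finset MeasureTheory Classical

noncomputable section

/-- A random subset `S` of the vertices of `(G, ω)` is an `(α, Δ)`-random separator:
(1) for every `v` and `R ≥ 0`, the skinny ball `B_ω(v,R)` avoids `S` with probability
at least `1 - αR/Δ`; (2) almost surely, every connected component of `G[V \ S]`
has `dist_ω`-diameter at most `Δ`. -/
def IsRandomSeparator {V : Type*} (G : SimpleGraph V) (ω : V → ℝ)
    {Ω : Type*} [MeasurableSpace Ω] (μ : Measure Ω) (S : Ω → Set V) (α Δ : ℝ) : Prop :=
  (∀ (v : V) (R : ℝ), 0 ≤ R →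
    1 - α * R / Δ ≤ (μ {o | ∀ u : V, distw G ω v u < R - ω u / 2 → u ∉ S o}).toReal) ∧
  (∀ᵐ o ∂μ, ∀ u v : ((S o)ᶜ : Set V),
    (G.induce ((S o)ᶜ : Set V)).Reachable u v → distw G ω (u : V) (v : V) ≤ Δ)


section aux
variable {V : Type*} {G : SimpleGraph V} {ω : V → ℝ}

lemma wlen_nonneg (hω : ∀ v, 0 ≤ ω v) {u v : V} (w : G.Walk u v) : 0 ≤ wlen ω w := by
  apply List.sum_nonneg
  intro x hx
  simp only [List.mem_map] at hx
  obtain ⟨d, _, rfl⟩ := hx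
  have := hω d.toProd.1; have := hω d.toProd.2; linarith

lemma wlen_nil {u : V} : wlen ω (SimpleGraph.Walk.nil (u := u) (G := G)) = 0 := by
  simp [wlen]

lemma wlen_cons {u v x : V} (h : G.Adj u v) (p : G.Walk v x) :
    wlen ω (SimpleGraph.Walk.cons h p) = (ω u + ω v)/2 + wlen ω p := by
  simp [wlen]

lemma wlen_append {u v x : V} (p : G.Walk u v) (q : G.Walk v x) :
    wlen ω (p.append q) = wlen ω p + wlen ω q := by
  unfold wlen
  rw [SimpleGraph.Walk.darts_append, List.map_append, List.sum_append]

lemma half_le_wlen (hω : ∀ v, 0 ≤ ω v) {u v : V} (p : G.Walk u v) (huv : u ≠ v) :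
    ω u / 2 ≤ wlen ω p := by
  cases p with
  | nil => exact absurd rfl huv
  | @cons _ c _ h q =>
    rw [wlen_cons]
    have h1 := wlen_nonneg hω q
    have h2 := hω c
    linarith

lemma ends_le_wlen (hω : ∀ v, 0 ≤ ω v) :
    ∀ {a b : V} (p : G.Walk a b), a ≠ b → (ω a + ω b)/2 ≤ wlen ω p := by
  intro a b p
  induction p with
  | nil => intro h; exact absurd rfl h
  | @cons a c b h q ih =>
    intro _
    rw [wlen_cons]
    by_cases hcb : c = b
    · subst hcb; have := wlen_nonneg hω q; linarith
    · have := ih hcb; have := hω c; linarith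

lemma distw_le (hω : ∀ v, 0 ≤ ω v) {u v : V} (w : G.Walk u v) :
    distw G ω u v ≤ wlen ω w :=
  csInf_le ⟨0, fun x ⟨w', hw'⟩ => hw' ▸ wlen_nonneg hω w'⟩ ⟨w, rfl⟩

lemma le_distw (hω : ∀ v, 0 ≤ ω v) (hG : G.Connected) {u v : V} (huv : u ≠ v) :
    (ω u + ω v)/2 ≤ distw G ω u v := by
  obtain ⟨w0⟩ := hG.preconnected u v
  exact le_csInf ⟨_, w0, rfl⟩ (fun x ⟨w', hw'⟩ => hw' ▸ ends_le_wlen hω w' huv)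

lemma exists_walk_lt (hG : G.Connected) (u v : V) {r : ℝ} (hr : 0 < r) :
    ∃ w : G.Walk u v, wlen ω w < distw G ω u v + r := by
  obtain ⟨w0⟩ := hG.preconnected u v
  have hne : {x | ∃ w : G.Walk u v, wlen ω w = x}.Nonempty := ⟨_, w0, rfl⟩
  have hlt : sInf {x | ∃ w : G.Walk u v, wlen ω w = x} < distw G ω u v + r := by
    have h0 : distw G ω u v < distw G ω u v + r := by linarith
    exact h0
  obtain ⟨_, ⟨w, rfl⟩, hx⟩ := exists_lt_of_csInf_lt hne hlt
  exact ⟨w, hx⟩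

lemma reachable_induce {T : Set V} {a b : V} (w : G.Walk a b)
    (hw : ∀ v ∈ w.support, v ∈ T) :
    (G.induce T).Reachable ⟨a, hw a w.start_mem_support⟩ ⟨b, hw b w.end_mem_support⟩ := by
  induction w with
  | nil => exact SimpleGraph.Reachable.refl _
  | @cons a c b h p ih =>
    have ha : a ∈ T := hw a (by simp)
    have hc : c ∈ T := hw c (by simp [SimpleGraph.Walk.support_cons])
    have hadj : (G.induce T).Adj ⟨a, ha⟩ ⟨c, hc⟩ := h
    exact hadj.reachable.trans
      (ih (fun v hv => hw v (by simp [SimpleGraph.Walk.support_cons, hv])))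

def sepSetoid (G : SimpleGraph V) (T : Set V) : Setoid V where
  r x y := x = y ∨ ∃ (hx : x ∈ Tᶜ) (hy : y ∈ Tᶜ),
    (G.induce (Tᶜ : Set V)).Reachable ⟨x, hx⟩ ⟨y, hy⟩
  iseqv := by
    constructor
    · intro x; exact Or.inl rfl
    · rintro x y (rfl | ⟨hx, hy, hr⟩)
      · exact Or.inl rfl
      · exact Or.inr ⟨hy, hx, hr.symm⟩
    · rintro x y z (rfl | ⟨hx, hy, hr⟩) h2
      · exact h2
      · rcases h2 with rfl | ⟨hy', hz, hr'⟩
        · exact Or.inr ⟨hx, hy, hr⟩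
        · exact Or.inr ⟨hx, hz, hr.trans hr'⟩

end aux

theorem stmt6 {V : Type*} [Fintype V] [DecidableEq V] (G : SimpleGraph V) (hG : G.Connected)
    (ω : V → ℝ) (hω : ∀ v, 0 ≤ ω v) (α Δ : ℝ) (hα : 0 < α) (hΔ : 0 < Δ)
    {Ω : Type*} [MeasurableSpace Ω] (μ : Measure Ω) [IsProbabilityMeasure μ]
    (S : Ω → Set V) (hsep : IsRandomSeparator G ω μ S α Δ) :
    ∃ (Ω' : Type) (_ : MeasurableSpace Ω') (μ' : Measure Ω')
      (P : Ω' → Finpartition (Finset.univ : Finset V)),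
      IsProbabilityMeasure μ' ∧ IsPaddedPartition (distw G ω) μ' P (8 * α) Δ := by
  classical
  obtain ⟨hsep1, hsep2⟩ := hsep
  -- the bad (null) set where separator components are unbounded
  set Bad : Set Ω := {o | ¬ ∀ u v : ((S o)ᶜ : Set V),
      (G.induce ((S o)ᶜ : Set V)).Reachable u v → distw G ω (u : V) (v : V) ≤ Δ} with hBadDef
  have hBad0 : μ Bad = 0 := by
    have := hsep2
    rw [MeasureTheory.ae_iff] at this
    exact this
  set M : Set Ω := toMeasurable μ Bad with hMdef
  have hM0 : μ M = 0 := by rw [hMdef, measure_toMeasurable]; exact hBad0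
  -- modified separator: on M use the whole vertex set (so parts are singletons)
  set S' : Ω → Set V := fun o => if o ∈ M then Set.univ else S o with hS'def
  -- the partition associated to each sample
  haveI instF : Fintype (Finpartition (Finset.univ : Finset V)) :=
    Fintype.ofInjective Finpartition.parts (fun p q h => Finpartition.ext h)
  set n := Fintype.card (Finpartition (Finset.univ : Finset V)) with hn
  set e := Fintype.equivFin (Finpartition (Finset.univ : Finset V)) with he
  set g : Ω → Finpartition (Finset.univ : Finset V) :=
    fun o => Finpartition.ofSetoid (sepSetoid G (S' o)) with hgdef
  set f : Ω → Fin n := fun o => e (g o) with hfdef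
  letI m' : MeasurableSpace (Fin n) := MeasurableSpace.map f inferInstance
  have hfmeas : Measurable f := fun s hs => hs
  set μ' : Measure (Fin n) := μ.map f with hμ'def
  haveI hprob : IsProbabilityMeasure μ' := Measure.isProbabilityMeasure_map hfmeas.aemeasurable
  set P : Fin n → Finpartition (Finset.univ : Finset V) := fun i => e.symm i with hPdef
  have hPf : ∀ o, P (f o) = g o := fun o => e.symm_apply_apply _
  -- every realized partition is Δ-bounded
  have hbdd : ∀ o : Ω, ∀ t ∈ (g o).parts, ∀ x ∈ t, ∀ y ∈ t, distw G ω x y ≤ Δ := by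
    intro o t ht x hx y hy
    have htx : (g o).part x = t := Finpartition.part_eq_of_mem (g o) ht hx
    have hyx : y ∈ (g o).part x := htx ▸ hy
    rw [hgdef] at hyx
    rw [Finpartition.mem_part_ofSetoid_iff_rel] at hyx
    rcases hyx with rfl | ⟨hx', hy', hr⟩
    · calc distw G ω x x ≤ wlen ω (SimpleGraph.Walk.nil (u := x) (G := G)) :=
            distw_le hω _
        _ = 0 := wlen_nil
        _ ≤ Δ := le_of_lt hΔ
    · by_cases hoM : o ∈ M
      · exfalso
        have hSu : S' o = Set.univ := if_pos hoM
        have h2 := hx'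
        rw [hSu] at h2
        simp at h2
      · have hSo : S' o = S o := if_neg hoM
        have hoBad : o ∉ Bad := fun h => hoM (subset_toMeasurable μ Bad h)
        rw [hBadDef] at hoBad
        simp only [Set.mem_setOf_eq, not_not] at hoBad
        rw [← hSo] at hoBad
        exact hoBad ⟨x, hx'⟩ ⟨y, hy'⟩ hr
  refine ⟨Fin n, m', μ', P, hprob, ?_, ?_⟩
  · -- a.s. bounded
    rw [MeasureTheory.ae_iff]
    have hman : MeasurableSet[m'] {o' : Fin n |
        ¬ ∀ t ∈ (P o').parts, ∀ x ∈ t, ∀ y ∈ t, distw G ω x y ≤ Δ} := by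
      show MeasurableSet (f ⁻¹' _)
      have hempty : f ⁻¹' {o' : Fin n |
          ¬ ∀ t ∈ (P o').parts, ∀ x ∈ t, ∀ y ∈ t, distw G ω x y ≤ Δ} = ∅ := by
        ext o
        simp only [Set.mem_preimage, Set.mem_setOf_eq, Set.mem_empty_iff_false, iff_false,
          not_not]
        rw [hPf o]
        exact hbdd o
      rw [hempty]
      exact MeasurableSet.empty
    have : μ' {o' : Fin n | ¬ ∀ t ∈ (P o').parts, ∀ x ∈ t, ∀ y ∈ t, distw G ω x y ≤ Δ} =
        μ (f ⁻¹' {o' : Fin n | ¬ ∀ t ∈ (P o').parts, ∀ x ∈ t, ∀ y ∈ t, distw G ω x y ≤ Δ}) :=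
      Measure.map_apply hfmeas hman
    rw [this]
    have hempty : f ⁻¹' {o' : Fin n |
        ¬ ∀ t ∈ (P o').parts, ∀ x ∈ t, ∀ y ∈ t, distw G ω x y ≤ Δ} = ∅ := by
      ext o
      simp only [Set.mem_preimage, Set.mem_setOf_eq, Set.mem_empty_iff_false, iff_false, not_not]
      rw [hPf o]
      exact hbdd o
    rw [hempty]
    exact measure_empty
  · -- padding
    intro x
    set r : ℝ := Δ / (8 * α) with hrdef
    have hr : 0 < r := div_pos hΔ (by linarith)
    set R : ℝ := Δ / (2 * α) with hRdef
    have hR4 : R = 4 * r := by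
      rw [hRdef, hrdef]
      field_simp
      ring
    have hR0 : 0 ≤ R := by linarith
    set A : Set Ω := {o | ∀ u : V, distw G ω x u < R - ω u / 2 → u ∉ S o} with hAdef
    have hA : (1/2 : ℝ) ≤ (μ A).toReal := by
      have := hsep1 x R hR0
      have harith : 1 - α * R / Δ = 1/2 := by
        rw [hRdef]
        field_simp
        ring
      rw [harith] at this
      exact this
    set E : Set (Fin n) := {o' | ∀ t ∈ (P o').parts, x ∈ t →
        ∀ y : V, distw G ω x y ≤ Δ / (8 * α) → y ∈ t} with hEdef
    have hsub : A \ M ⊆ f ⁻¹' E := by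
      rintro o ⟨hoA, hoM⟩
      have hSo : S' o = S o := if_neg hoM
      simp only [Set.mem_preimage, hEdef, Set.mem_setOf_eq]
      intro t ht hxt y hy
      rw [hPf o] at ht
      have htx : (g o).part x = t := Finpartition.part_eq_of_mem (g o) ht hxt
      rw [← htx]
      rw [hgdef, Finpartition.mem_part_ofSetoid_iff_rel]
      by_cases hxy : x = y
      · exact Or.inl hxy
      · -- build the walk and show all its vertices avoid S o
        have hdist : distw G ω x y ≤ r := by rw [hrdef]; exact hy
        have hends : (ω x + ω y)/2 ≤ r := le_trans (le_distw hω hG hxy) hdist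
        obtain ⟨W, hW⟩ := exists_walk_lt (ω := ω) hG x y hr
        have hW2 : wlen ω W < 2 * r := by linarith
        have hsupp : ∀ v ∈ W.support, v ∈ ((S o)ᶜ : Set V) := by
          intro u hu
          have hpre : distw G ω x u ≤ wlen ω (W.takeUntil u hu) := distw_le hω _
          have hsplit : wlen ω (W.takeUntil u hu) + wlen ω (W.dropUntil u hu) = wlen ω W := by
            rw [← wlen_append, SimpleGraph.Walk.take_spec]
          have hskinny : distw G ω x u < R - ω u / 2 := by
            by_cases huy : u = y
            · subst huy
              have h1 : distw G ω x u ≤ r := hdist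
              have h2 : ω u / 2 ≤ r := by
                have := hω x; linarith
              linarith
            · have h3 : ω u / 2 ≤ wlen ω (W.dropUntil u hu) :=
                half_le_wlen hω _ huy
              have h4 : 0 ≤ wlen ω (W.dropUntil u hu) := wlen_nonneg hω _
              linarith
          exact hoA u hskinny
        have hxm : x ∈ ((S o)ᶜ : Set V) := hsupp x W.start_mem_support
        have hym : y ∈ ((S o)ᶜ : Set V) := hsupp y W.end_mem_support
        have hreach := reachable_induce W hsupp
        refine Or.inr ?_
        rw [hSo]
        exact ⟨hxm, hym, hreach⟩
    have hle1 : μ A ≤ μ (A \ M) := by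
      calc μ A ≤ μ ((A \ M) ∪ M) := measure_mono (fun o ho => by
            by_cases h : o ∈ M
            · exact Or.inr h
            · exact Or.inl ⟨ho, h⟩)
        _ ≤ μ (A \ M) + μ M := measure_union_le _ _
        _ = μ (A \ M) := by rw [hM0, add_zero]
    have hle2 : μ (A \ M) ≤ μ' E :=
      le_trans (measure_mono hsub) (Measure.le_map_apply hfmeas.aemeasurable E)
    have hle : μ A ≤ μ' E := le_trans hle1 hle2
    calc (1/2 : ℝ) ≤ (μ A).toReal := hA
      _ ≤ (μ' E).toReal := ENNReal.toReal_mono (measure_ne_top μ' E) hle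

end
end

section
/- For any graph H, the optimal crossing congestion over all H-flows in G equals the optimal crossing congestion over all integral H-flows in G: cross*_G(H) = cross†_G(H). -/
open Finset
open scoped Classical

noncomputable section

/-- The type of (simple) paths of a graph, between any pair of endpoints. -/
abbrev Paths {V : Type*} (G : SimpleGraph V) := Σ u v : V, G.Path u v

/-- The total flow `Λ[u,v]` sent between `u` and `v` by the multi-flow `Λ`. -/
noncomputable def flowBetween {V : Type*} [Fintype V] [DecidableEq V] (G : SimpleGraph V)
    [DecidableRel G.Adj] (Λ : Paths G → ℝ) (u v : V) : ℝ :=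
  ∑ p : G.Path u v, Λ ⟨u, v, p⟩

/-- The congestion map `c_Λ(x) = Σ_{γ ∋ x} Λ(γ)`. -/
noncomputable def cong {V : Type*} [Fintype V] [DecidableEq V] (G : SimpleGraph V)
    [DecidableRel G.Adj] (Λ : Paths G → ℝ) (x : V) : ℝ :=
  ∑ p : Paths G, if x ∈ (p.2.2 : G.Walk p.1 p.2.1).support then Λ p else 0

/-- `(Λ, f)` is an `H`-flow in `G`: `Λ` is a nonnegative multi-flow and for all `u, v`,
the flow sent between `u` and `v` equals the number of edges of `H` mapped by `f`
onto the pair `{u, v}`. -/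
def IsHFlow {V U : Type*} [Fintype V] [DecidableEq V] (G : SimpleGraph V)
    [DecidableRel G.Adj] (H : SimpleGraph U) (Λ : Paths G → ℝ) (f : U → V) : Prop :=
  (∀ p, 0 ≤ Λ p) ∧
  ∀ u v : V, flowBetween G Λ u v =
    (({e ∈ H.edgeSet | Sym2.map f e = s(u, v)} : Set (Sym2 U)).ncard : ℝ)

/-- An integral multi-flow takes values in the nonnegative integers. -/
def IsIntegralFlow {V : Type*} (G : SimpleGraph V) (Λ : Paths G → ℝ) : Prop :=
  ∀ p, ∃ n : ℕ, Λ p = (n : ℝ)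

/-- The crossing congestion of an `H`-flow `(Λ, f)` in `G`: the total weight
`Λ(γ)Λ(γ')` over pairs of intersecting paths carrying flow between the images of
two vertex-disjoint edges of `H`.  (Vertex 4-tuples count each ordered pair of
unordered edges four times, whence the factor `1/4`.) -/
noncomputable def crossCong {V U : Type*} [Fintype V] [DecidableEq V] (G : SimpleGraph V)
    [DecidableRel G.Adj] (H : SimpleGraph U) [Fintype U] [DecidableEq U]
    (Λ : Paths G → ℝ) (f : U → V) : ℝ :=
  (1 / 4) * ∑ x : U, ∑ y : U, ∑ x' : U, ∑ y' : U,
    if H.Adj x y ∧ H.Adj x' y' ∧ ({x, y, x', y'} : Finset U).card = 4 then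
      ∑ γ : G.Path (f x) (f y), ∑ γ' : G.Path (f x') (f y'),
        if ((γ : G.Walk (f x) (f y)).support ∩ (γ' : G.Walk (f x') (f y')).support) ≠ [] then
          Λ ⟨f x, f y, γ⟩ * Λ ⟨f x', f y', γ'⟩
        else 0
    else 0

/-- `cross*_G(H)`: the optimal crossing congestion over all `H`-flows in `G`. -/
noncomputable def crossStar {V U : Type*} [Fintype V] [DecidableEq V] (G : SimpleGraph V)
    [DecidableRel G.Adj] (H : SimpleGraph U) [Fintype U] [DecidableEq U] : ℝ :=
  sInf {x | ∃ (Λ : Paths G → ℝ) (f : U → V), IsHFlow G H Λ f ∧ x = crossCong G H Λ f}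

/-- `cross†_G(H)`: the optimal crossing congestion over all integral `H`-flows in `G`. -/
noncomputable def crossDagger {V U : Type*} [Fintype V] [DecidableEq V] (G : SimpleGraph V)
    [DecidableRel G.Adj] (H : SimpleGraph U) [Fintype U] [DecidableEq U] : ℝ :=
  sInf {x | ∃ (Λ : Paths G → ℝ) (f : U → V),
    IsHFlow G H Λ f ∧ IsIntegralFlow G Λ ∧ x = crossCong G H Λ f}

/-- The `ℓ∞` vertex congestion of `G`: the least possible maximum vertex congestion
of a multi-flow routing one unit between every pair of distinct vertices. -/
noncomputable def vcongInfty {V : Type*} [Fintype V] [DecidableEq V] (G : SimpleGraph V)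
    [DecidableRel G.Adj] : ℝ :=
  sInf {x | ∃ Λ : Paths G → ℝ, (∀ p, 0 ≤ Λ p) ∧
    (∀ u v : V, u ≠ v → flowBetween G Λ u v = 1) ∧ x = ⨆ z : V, cong G Λ z}

/-- `Ĝ` is a region intersection graph over `G`. -/
def IsRig {W V : Type*} (Ghat : SimpleGraph W) (G : SimpleGraph V) : Prop :=
  ∃ R : W → Set V, (∀ u : W, (G.induce (R u)).Connected) ∧
    ∀ u v : W, u ≠ v → (Ghat.Adj u v ↔ (R u ∩ R v).Nonempty)


section Aux

set_option linter.unusedSectionVars false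

variable {V : Type*} [Fintype V] [DecidableEq V] (G : SimpleGraph V) [DecidableRel G.Adj]

def updateFlow (Λ : Paths G → ℝ) (u v : V) (γ0 : G.Path u v) (n : ℝ) : Paths G → ℝ :=
  fun p => if (p.1, p.2.1) = (u, v) then (if p = ⟨u, v, γ0⟩ then n else 0) else Λ p

lemma updateFlow_off (Λ : Paths G → ℝ) (u v : V) (γ0 : G.Path u v) (n : ℝ)
    (p : Paths G) (h : (p.1, p.2.1) ≠ (u, v)) : updateFlow G Λ u v γ0 n p = Λ p := by
  simp [updateFlow, h]

lemma updateFlow_on (Λ : Paths G → ℝ) (u v : V) (γ0 γ : G.Path u v) (n : ℝ) :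
    updateFlow G Λ u v γ0 n ⟨u, v, γ⟩ = if γ = γ0 then n else 0 := by
  simp [updateFlow]

lemma sum_updateFlow (Λ : Paths G → ℝ) (u v : V) (γ0 : G.Path u v) (n : ℝ) :
    ∑ γ : G.Path u v, updateFlow G Λ u v γ0 n ⟨u, v, γ⟩ = n := by
  simp only [updateFlow_on]; simp

lemma flowBetween_updateFlow (Λ : Paths G → ℝ) (u v : V) (γ0 : G.Path u v) (n : ℝ)
    (a b : V) : flowBetween G (updateFlow G Λ u v γ0 n) a b =
      if (a, b) = (u, v) then n else flowBetween G Λ a b := by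
  split_ifs with h
  · have ha : a = u := congrArg Prod.fst h
    have hb : b = v := congrArg Prod.snd h
    subst ha; subst hb
    exact sum_updateFlow G Λ a b γ0 n
  · exact Finset.sum_congr rfl fun γ _ => updateFlow_off G Λ u v γ0 n ⟨a, b, γ⟩ (by simpa using h)

def Tfun (Λ : Paths G → ℝ) (a b a' b' : V) : ℝ :=
  ∑ γ : G.Path a b, ∑ γ' : G.Path a' b',
    if ((γ : G.Walk a b).support ∩ (γ' : G.Walk a' b').support) ≠ [] then
      Λ ⟨a, b, γ⟩ * Λ ⟨a', b', γ'⟩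
    else 0

lemma Tfun_same (Λ : Paths G → ℝ) (u v : V) :
    Tfun G Λ u v u v = flowBetween G Λ u v * flowBetween G Λ u v := by
  have hind : ∀ (γ γ' : G.Path u v),
      ((γ : G.Walk u v).support ∩ (γ' : G.Walk u v).support) ≠ [] := by
    intro γ γ'
    refine List.ne_nil_of_mem (a := u) ?_
    rw [List.mem_inter_iff]
    exact ⟨(γ : G.Walk u v).start_mem_support, (γ' : G.Walk u v).start_mem_support⟩
  unfold Tfun flowBetween
  rw [Finset.sum_mul_sum]
  exact Finset.sum_congr rfl fun γ _ => Finset.sum_congr rfl fun γ' _ => by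
    rw [if_pos (hind γ γ')]

lemma Tfun_congr (Λ Λ' : Paths G → ℝ) (a b a' b' : V)
    (h1 : ∀ γ : G.Path a b, Λ ⟨a, b, γ⟩ = Λ' ⟨a, b, γ⟩)
    (h2 : ∀ γ' : G.Path a' b', Λ ⟨a', b', γ'⟩ = Λ' ⟨a', b', γ'⟩) :
    Tfun G Λ a b a' b' = Tfun G Λ' a b a' b' := by
  unfold Tfun
  refine Finset.sum_congr rfl fun γ _ => Finset.sum_congr rfl fun γ' _ => ?_
  rw [h1 γ, h2 γ']

lemma Tfun_convex (Λ : Paths G → ℝ) (u v : V) (hn : flowBetween G Λ u v ≠ 0)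
    (a b a' b' : V) :
    ∑ γ0 : G.Path u v, (Λ ⟨u, v, γ0⟩ / flowBetween G Λ u v) *
        Tfun G (updateFlow G Λ u v γ0 (flowBetween G Λ u v)) a b a' b'
      = Tfun G Λ a b a' b' := by
  set n := flowBetween G Λ u v with hndef
  have hw : ∑ γ0 : G.Path u v, Λ ⟨u, v, γ0⟩ / n = 1 := by
    rw [← Finset.sum_div]
    exact div_self hn
  by_cases h1 : (a, b) = (u, v) <;> by_cases h2 : (a', b') = (u, v)
  · have ha : a = u := congrArg Prod.fst h1
    have hb : b = v := congrArg Prod.snd h1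
    have ha' : a' = u := congrArg Prod.fst h2
    have hb' : b' = v := congrArg Prod.snd h2
    subst ha; subst hb; subst ha'; subst hb'
    have key : ∀ γ0 : G.Path a' b',
        Tfun G (updateFlow G Λ a' b' γ0 n) a' b' a' b' = n * n := by
      intro γ0
      rw [Tfun_same]
      have := sum_updateFlow G Λ a' b' γ0 n
      rw [show flowBetween G (updateFlow G Λ a' b' γ0 n) a' b' = n from this]
    rw [Tfun_same]
    simp only [key]
    rw [← Finset.sum_mul, hw, one_mul]
  · have ha : a = u := congrArg Prod.fst h1
    have hb : b = v := congrArg Prod.snd h1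
    subst ha; subst hb
    have hT : ∀ γ0 : G.Path a b,
        Tfun G (updateFlow G Λ a b γ0 n) a b a' b' =
        ∑ γ' : G.Path a' b',
          if ((γ0 : G.Walk a b).support ∩ (γ' : G.Walk a' b').support) ≠ [] then
            n * Λ ⟨a', b', γ'⟩ else 0 := by
      intro γ0
      unfold Tfun
      rw [Finset.sum_eq_single γ0]
      · refine Finset.sum_congr rfl fun γ' _ => ?_
        rw [updateFlow_on, if_pos rfl,
          updateFlow_off G Λ a b γ0 n ⟨a', b', γ'⟩ (by simpa using h2)]
      · intro γ _ hne
        refine Finset.sum_eq_zero fun γ' _ => ?_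
        rw [updateFlow_on, if_neg hne]
        simp
      · intro h; exact absurd (Finset.mem_univ γ0) h
    simp only [hT, Finset.mul_sum]
    rw [Finset.sum_comm]
    unfold Tfun
    rw [Finset.sum_comm]
    refine Finset.sum_congr rfl fun γ' _ => Finset.sum_congr rfl fun γ0 _ => ?_
    split_ifs with h
    · field_simp
    · ring
  · have ha : a' = u := congrArg Prod.fst h2
    have hb : b' = v := congrArg Prod.snd h2
    subst ha; subst hb
    have hT : ∀ γ0 : G.Path a' b',
        Tfun G (updateFlow G Λ a' b' γ0 n) a b a' b' =
        ∑ γ : G.Path a b,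
          if ((γ : G.Walk a b).support ∩ (γ0 : G.Walk a' b').support) ≠ [] then
            Λ ⟨a, b, γ⟩ * n else 0 := by
      intro γ0
      unfold Tfun
      refine Finset.sum_congr rfl fun γ _ => ?_
      rw [Finset.sum_eq_single γ0]
      · rw [updateFlow_on, if_pos rfl,
          updateFlow_off G Λ a' b' γ0 n ⟨a, b, γ⟩ (by simpa using h1)]
      · intro γ' _ hne
        rw [updateFlow_on, if_neg hne]
        simp
      · intro h; exact absurd (Finset.mem_univ γ0) h
    simp only [hT, Finset.mul_sum]
    rw [Finset.sum_comm]
    unfold Tfun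
    refine Finset.sum_congr rfl fun γ _ => Finset.sum_congr rfl fun γ0 _ => ?_
    split_ifs with h
    · field_simp
    · ring
  · have hT : ∀ γ0 : G.Path u v,
        Tfun G (updateFlow G Λ u v γ0 n) a b a' b' = Tfun G Λ a b a' b' := by
      intro γ0
      exact Tfun_congr G _ Λ a b a' b'
        (fun γ => updateFlow_off G Λ u v γ0 n ⟨a, b, γ⟩ (by simpa using h1))
        (fun γ' => updateFlow_off G Λ u v γ0 n ⟨a', b', γ'⟩ (by simpa using h2))
    simp only [hT]
    rw [← Finset.sum_mul, hw, one_mul]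

variable {U : Type*} (H : SimpleGraph U) [Fintype U] [DecidableEq U]

lemma crossCong_eq (Λ : Paths G → ℝ) (f : U → V) :
    crossCong G H Λ f = (1 / 4) * ∑ x : U, ∑ y : U, ∑ x' : U, ∑ y' : U,
      if H.Adj x y ∧ H.Adj x' y' ∧ ({x, y, x', y'} : Finset U).card = 4 then
        Tfun G Λ (f x) (f y) (f x') (f y') else 0 := rfl

lemma sum_comm5 {α β : Type*} [Fintype α] [Fintype β] (g : α → β → β → β → β → ℝ) :
    ∑ a : α, ∑ x : β, ∑ y : β, ∑ z : β, ∑ t : β, g a x y z t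
      = ∑ x : β, ∑ y : β, ∑ z : β, ∑ t : β, ∑ a : α, g a x y z t := by
  rw [Finset.sum_comm]
  refine Finset.sum_congr rfl fun x _ => ?_
  rw [Finset.sum_comm]
  refine Finset.sum_congr rfl fun y _ => ?_
  rw [Finset.sum_comm]
  refine Finset.sum_congr rfl fun z _ => ?_
  rw [Finset.sum_comm]

lemma crossCong_convex (Λ : Paths G → ℝ) (f : U → V) (u v : V)
    (hn : flowBetween G Λ u v ≠ 0) :
    ∑ γ0 : G.Path u v, (Λ ⟨u, v, γ0⟩ / flowBetween G Λ u v) *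
        crossCong G H (updateFlow G Λ u v γ0 (flowBetween G Λ u v)) f
      = crossCong G H Λ f := by
  set n := flowBetween G Λ u v with hndef
  simp only [crossCong_eq]
  have step1 : ∀ (g : G.Path u v → ℝ),
      ∑ γ0 : G.Path u v, (Λ ⟨u, v, γ0⟩ / n) * ((1 / 4) * g γ0)
        = (1 / 4) * ∑ γ0 : G.Path u v, (Λ ⟨u, v, γ0⟩ / n) * g γ0 := by
    intro g
    rw [Finset.mul_sum]
    exact Finset.sum_congr rfl fun _ _ => by ring
  rw [step1]
  congr 1
  simp only [Finset.mul_sum]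
  rw [sum_comm5]
  refine Finset.sum_congr rfl fun x _ => Finset.sum_congr rfl fun y _ =>
    Finset.sum_congr rfl fun x' _ => Finset.sum_congr rfl fun y' _ => ?_
  split_ifs with hgood
  · exact Tfun_convex G Λ u v hn (f x) (f y) (f x') (f y')
  · simp

lemma block_step (Λ : Paths G → ℝ) (f : U → V) (hΛ : IsHFlow G H Λ f) (u v : V) :
    ∃ Λ' : Paths G → ℝ, IsHFlow G H Λ' f ∧
      crossCong G H Λ' f ≤ crossCong G H Λ f ∧
      (∀ p : Paths G, (p.1, p.2.1) ≠ (u, v) → Λ' p = Λ p) ∧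
      (∀ p : Paths G, (p.1, p.2.1) = (u, v) → ∃ m : ℕ, Λ' p = m) := by
  set n := flowBetween G Λ u v with hndef
  obtain ⟨k, hk⟩ : ∃ k : ℕ, n = (k : ℝ) := ⟨_, hΛ.2 u v⟩
  by_cases hn : n = 0
  · refine ⟨Λ, hΛ, le_refl _, fun _ _ => rfl, ?_⟩
    rintro ⟨a, b, γ⟩ hp
    have ha : a = u := congrArg Prod.fst hp
    have hb : b = v := congrArg Prod.snd hp
    subst ha; subst hb
    refine ⟨0, ?_⟩
    have hz : ∑ γ' : G.Path a b, Λ ⟨a, b, γ'⟩ = 0 := hn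
    have := (Finset.sum_eq_zero_iff_of_nonneg
      (fun γ' _ => hΛ.1 ⟨a, b, γ'⟩)).mp hz γ (Finset.mem_univ γ)
    simpa using this
  · -- there is a path with small congestion after rounding this block
    have hw : ∑ γ0 : G.Path u v, Λ ⟨u, v, γ0⟩ / n = 1 := by
      rw [← Finset.sum_div]; exact div_self hn
    obtain ⟨γ1, -, hγ1⟩ : ∃ γ0 ∈ (Finset.univ : Finset (G.Path u v)),
        (0:ℝ) < Λ ⟨u, v, γ0⟩ / n := by
      apply Finset.exists_lt_of_sum_lt (f := fun _ => (0:ℝ))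
      rw [hw]; simp
    obtain ⟨γ0, hγ0⟩ : ∃ γ0 : G.Path u v,
        crossCong G H (updateFlow G Λ u v γ0 n) f ≤ crossCong G H Λ f := by
      by_contra hcon
      push_neg at hcon
      have hlt : ∑ γ0 : G.Path u v, (Λ ⟨u, v, γ0⟩ / n) * crossCong G H Λ f
          < ∑ γ0 : G.Path u v, (Λ ⟨u, v, γ0⟩ / n) *
              crossCong G H (updateFlow G Λ u v γ0 n) f := by
        refine Finset.sum_lt_sum (fun γ _ => ?_) ⟨γ1, Finset.mem_univ γ1, ?_⟩
        · refine mul_le_mul_of_nonneg_left (le_of_lt (hcon γ)) ?_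
          have h0 : (0:ℝ) ≤ Λ ⟨u, v, γ⟩ := hΛ.1 _
          have hnpos : (0:ℝ) ≤ n := by rw [hk]; positivity
          positivity
        · exact mul_lt_mul_of_pos_left (hcon γ1) hγ1
      rw [← Finset.sum_mul, hw, one_mul, crossCong_convex G H Λ f u v hn] at hlt
      exact lt_irrefl _ hlt
    refine ⟨updateFlow G Λ u v γ0 n, ⟨?_, ?_⟩, hγ0, ?_, ?_⟩
    · intro p
      by_cases hp : (p.1, p.2.1) = (u, v)
      · obtain ⟨a, b, γ⟩ := p
        have ha : a = u := congrArg Prod.fst hp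
        have hb : b = v := congrArg Prod.snd hp
        subst ha; subst hb
        rw [updateFlow_on]
        split_ifs
        · rw [hk]; positivity
        · exact le_refl _
      · rw [updateFlow_off G Λ u v γ0 n p hp]; exact hΛ.1 p
    · intro a b
      rw [flowBetween_updateFlow]
      split_ifs with h
      · have ha : a = u := congrArg Prod.fst h
        have hb : b = v := congrArg Prod.snd h
        subst ha; subst hb
        exact hΛ.2 a b
      · exact hΛ.2 a b
    · exact fun p hp => updateFlow_off G Λ u v γ0 n p hp
    · rintro ⟨a, b, γ⟩ hp
      have ha : a = u := congrArg Prod.fst hp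
      have hb : b = v := congrArg Prod.snd hp
      subst ha; subst hb
      rw [updateFlow_on]
      split_ifs
      · exact ⟨k, hk⟩
      · exact ⟨0, by simp⟩

lemma exists_integral (Λ : Paths G → ℝ) (f : U → V) (hΛ : IsHFlow G H Λ f) :
    ∃ Λ' : Paths G → ℝ, IsHFlow G H Λ' f ∧ IsIntegralFlow G Λ' ∧
      crossCong G H Λ' f ≤ crossCong G H Λ f := by
  suffices h : ∀ S : Finset (V × V), ∃ Λ' : Paths G → ℝ, IsHFlow G H Λ' f ∧
      (∀ p : Paths G, (p.1, p.2.1) ∈ S → ∃ m : ℕ, Λ' p = m) ∧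
      crossCong G H Λ' f ≤ crossCong G H Λ f by
    obtain ⟨Λ', h1, h2, h3⟩ := h Finset.univ
    exact ⟨Λ', h1, fun p => h2 p (Finset.mem_univ _), h3⟩
  intro S
  induction S using Finset.induction_on with
  | empty => exact ⟨Λ, hΛ, by simp, le_refl _⟩
  | @insert b S hbS ih =>
    obtain ⟨Λ₁, h1, h2, h3⟩ := ih
    obtain ⟨Λ₂, g1, g2, g3, g4⟩ := block_step G H Λ₁ f h1 b.1 b.2
    refine ⟨Λ₂, g1, ?_, g2.trans h3⟩
    intro p hp
    by_cases hpb : (p.1, p.2.1) = (b.1, b.2)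
    · exact g4 p hpb
    · rw [g3 p hpb]
      rcases Finset.mem_insert.1 hp with h | h
      · exact absurd (by rw [h]) hpb
      · exact h2 p h

lemma crossCong_nonneg (Λ : Paths G → ℝ) (f : U → V) (hΛ : ∀ p, 0 ≤ Λ p) :
    0 ≤ crossCong G H Λ f := by
  rw [crossCong_eq]
  refine mul_nonneg (by norm_num) (Finset.sum_nonneg fun x _ => Finset.sum_nonneg fun y _ =>
    Finset.sum_nonneg fun x' _ => Finset.sum_nonneg fun y' _ => ?_)
  split_ifs with h
  · refine Finset.sum_nonneg fun γ _ => Finset.sum_nonneg fun γ' _ => ?_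
    split_ifs
    · exact mul_nonneg (hΛ _) (hΛ _)
    · exact le_refl _
  · exact le_refl _

end Aux

theorem stmt8 {V U : Type*} [Fintype V] [DecidableEq V] (G : SimpleGraph V)
    [DecidableRel G.Adj] (H : SimpleGraph U) [Fintype U] [DecidableEq U] :
    crossStar G H = crossDagger G H := by
  set Sstar := {x | ∃ (Λ : Paths G → ℝ) (f : U → V),
    IsHFlow G H Λ f ∧ x = crossCong G H Λ f} with hSstar
  set Sdag := {x | ∃ (Λ : Paths G → ℝ) (f : U → V),
    IsHFlow G H Λ f ∧ IsIntegralFlow G Λ ∧ x = crossCong G H Λ f} with hSdag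
  have hsub : Sdag ⊆ Sstar := by
    rintro x ⟨Λ, f, h1, h2, h3⟩
    exact ⟨Λ, f, h1, h3⟩
  have hbdd : BddBelow Sstar := by
    refine ⟨0, ?_⟩
    rintro x ⟨Λ, f, h1, rfl⟩
    exact crossCong_nonneg G H Λ f h1.1
  show sInf Sstar = sInf Sdag
  by_cases hS : Sstar.Nonempty
  · have hdag : Sdag.Nonempty := by
      obtain ⟨x, Λ, f, h1, h3⟩ := hS
      obtain ⟨Λ', g1, g2, g3⟩ := exists_integral G H Λ f h1
      exact ⟨crossCong G H Λ' f, Λ', f, g1, g2, rfl⟩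
    refine le_antisymm (csInf_le_csInf hbdd hdag hsub) ?_
    refine le_csInf hS ?_
    rintro x ⟨Λ, f, h1, rfl⟩
    obtain ⟨Λ', g1, g2, g3⟩ := exists_integral G H Λ f h1
    exact le_trans (csInf_le (hbdd.mono hsub) ⟨Λ', f, g1, g2, rfl⟩) g3
  · have h1 : Sstar = ∅ := Set.not_nonempty_iff_eq_empty.mp hS
    have h2 : Sdag = ∅ := Set.eq_empty_of_subset_empty (h1 ▸ hsub)
    rw [h1, h2]

end
end

section
/- A graph G has a careful H-minor if and only if there exist pairwise-disjoint connected subsets {B_u ⊆ V_G : u ∈ V_H} and distinct vertices W = {w_{xy} : {x,y} ∈ E_H} ⊆ V_G \ ⋃_u B_u such that: (1) there are no edges between B_u and B_v for u ≠ v; (2) W is an independent set in G; (3) for every {x,y} ∈ E_H and every u ∈ V_H, there is an edge between w_{xy} and B_u if and only if u ∈ {x,y}. -/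
/-!
Taking the branch sets `B u` together with singletons `{w e}` gives a strict model of the
subdivision. Conversely, given a strict model `A` of the subdivision, walk inside the branch set
`A e` of an edge `e = xy` from a neighbour of `A x` to a neighbour of `A y`, and let `w e` be the
first vertex of the walk with a neighbour in `A y`. The vertices passed before it form a set
`P e` that is connected to `A x` and has no neighbour in `A y`, nor, by strictness, in any other
`A v` with `v ≠ x`. Hence the sets `B x = A x ∪ ⋃_{e = xy} P e` and the vertices `w e` work.
-/

noncomputable section

/-- `H` is a minor of `G`, witnessed by pairwise-disjoint connected branch sets. -/
def IsMinor {V U : Type*} (G : SimpleGraph V) (H : SimpleGraph U) : Prop :=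
  ∃ A : U → Set V, (∀ u : U, (G.induce (A u)).Connected) ∧
    Pairwise (Function.onFun Disjoint A) ∧
    ∀ u v : U, H.Adj u v → ∃ a ∈ A u, ∃ b ∈ A v, G.Adj a b

/-- `H` is a strict minor of `G`: branch sets with edges between `A u` and `A v`
*exactly* when `{u,v}` is an edge of `H`. -/
def IsStrictMinor {V U : Type*} (G : SimpleGraph V) (H : SimpleGraph U) : Prop :=
  ∃ A : U → Set V, (∀ u : U, (G.induce (A u)).Connected) ∧
    Pairwise (Function.onFun Disjoint A) ∧
    ∀ u v : U, u ≠ v → (H.Adj u v ↔ ∃ a ∈ A u, ∃ b ∈ A v, G.Adj a b)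

/-- The subdivision `Ḣ` of `H`: every edge is replaced by a path of length two
through a new vertex. -/
def subdiv {U : Type*} (H : SimpleGraph U) : SimpleGraph (U ⊕ H.edgeSet) where
  Adj a b :=
    match a, b with
    | Sum.inl u, Sum.inr e => u ∈ (e : Sym2 U)
    | Sum.inr e, Sum.inl u => u ∈ (e : Sym2 U)
    | _, _ => False
  symm := ⟨by rintro (u | e) (v | f) h <;> simp_all⟩
  loopless := ⟨by rintro (u | e) h <;> simp_all⟩

/-- `H` is a careful minor of `G` if the subdivision of `H` is a strict minor of `G`. -/
def IsCarefulMinor {V U : Type*} (G : SimpleGraph V) (H : SimpleGraph U) : Prop :=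
  IsStrictMinor G (subdiv H)

open SimpleGraph Set Sum

section Connectivity

variable {V : Type*} {G : SimpleGraph V}

lemma SimpleGraph.induce_insert_connected {X : Set V} {a c : V} (hX : (G.induce X).Connected)
    (hc : c ∈ X) (hac : G.Adj a c) : (G.induce (insert a X)).Connected := by
  rw [insert_eq]
  exact connected_induce_union (Connected.of_subsingleton (V := ({a} : Set V))).preconnected
    hX.preconnected rfl hc hac

lemma SimpleGraph.induce_union_iUnion_connected {ι : Type*} {X : Set V} {Y : ι → Set V}
    (hX : (G.induce X).Connected) (hY : ∀ i, (G.induce (X ∪ Y i)).Connected) :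
    (G.induce (X ∪ ⋃ i, Y i)).Connected := by
  obtain ⟨⟨x, hx⟩⟩ := hX.nonempty
  refine G.induce_connected_of_patches x (Or.inl hx) fun {v} hv => ?_
  rcases hv with hv | hv
  · exact ⟨X, subset_union_left, hx, hv, hX.preconnected _ _⟩
  · obtain ⟨i, hv⟩ := mem_iUnion.1 hv
    exact ⟨X ∪ Y i, union_subset_union_right _ (subset_iUnion Y i), Or.inl hx, Or.inr hv,
      (hY i).preconnected _ _⟩

lemma SimpleGraph.exists_split_of_walk {X S T : Set V} {a b : S} (p : (G.induce S).Walk a b)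
    (hX : (G.induce X).Connected) (ha : ∃ c ∈ X, G.Adj a c) (hb : ∃ t ∈ T, G.Adj b t) :
    ∃ w ∈ S, ∃ P ⊆ S, w ∉ P ∧ (G.induce (X ∪ P)).Connected ∧ (∃ c ∈ X ∪ P, G.Adj w c) ∧
      (∃ t ∈ T, G.Adj w t) ∧ ∀ q ∈ P, ∀ t ∈ T, ¬ G.Adj q t := by
  induction p generalizing X with
  | nil =>
    exact ⟨_, Subtype.prop _, ∅, empty_subset _, notMem_empty _, by rwa [union_empty],
      by rwa [union_empty], hb, by simp⟩
  | @cons a c b hac p ih =>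
    obtain ⟨d, hd, had⟩ := ha
    by_cases haT : ∃ t ∈ T, G.Adj a t
    · exact ⟨a, a.2, ∅, empty_subset _, notMem_empty _, by rwa [union_empty],
        ⟨d, Or.inl hd, had⟩, haT, by simp⟩
    obtain ⟨w, hw, P, hP, hwP, hconn, hwX, hwT, hPT⟩ :=
      ih (G.induce_insert_connected hX hd had) ⟨a, mem_insert _ _, hac.symm⟩ hb
    have hXP : X ∪ insert (a : V) P = insert (a : V) X ∪ P := by
      rw [union_insert, insert_union]
    refine ⟨w, hw, insert (a : V) P, insert_subset a.2 hP, ?_, hXP ▸ hconn, hXP ▸ hwX, hwT, ?_⟩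
    · rintro (rfl | hwP')
      · exact haT hwT
      · exact hwP hwP'
    · rintro q (rfl | hq)
      · exact fun t ht hqt => haT ⟨t, ht, hqt⟩
      · exact hPT q hq

end Connectivity

section Subdivision

variable {V U : Type*} {G : SimpleGraph V} {H : SimpleGraph U}

@[simp] lemma subdiv_adj_inl_inl {u v : U} : ¬ (subdiv H).Adj (inl u) (inl v) := nofun

@[simp] lemma subdiv_adj_inr_inr {e f : H.edgeSet} : ¬ (subdiv H).Adj (inr e) (inr f) := nofun

@[simp] lemma subdiv_adj_inl_inr {u : U} {e : H.edgeSet} :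
    (subdiv H).Adj (inl u) (inr e) ↔ u ∈ (e : Sym2 U) := Iff.rfl

@[simp] lemma subdiv_adj_inr_inl {u : U} {e : H.edgeSet} :
    (subdiv H).Adj (inr e) (inl u) ↔ u ∈ (e : Sym2 U) := Iff.rfl

variable (G H) in
structure IsCarefulModel (B : U → Set V) (w : H.edgeSet → V) : Prop where
  connected : ∀ u, (G.induce (B u)).Connected
  pairwise_disjoint : Pairwise (Function.onFun Disjoint B)
  injective : Function.Injective w
  notMem : ∀ e u, w e ∉ B u
  not_adj : ∀ u v, u ≠ v → ∀ a ∈ B u, ∀ b ∈ B v, ¬ G.Adj a b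
  not_adj_subdivision : ∀ e f, ¬ G.Adj (w e) (w f)
  exists_adj_iff : ∀ e u, (∃ b ∈ B u, G.Adj (w e) b) ↔ u ∈ (e : Sym2 U)

theorem IsCarefulModel.isCarefulMinor {B : U → Set V} {w : H.edgeSet → V}
    (h : IsCarefulModel G H B w) : IsCarefulMinor G H := by
  refine ⟨Sum.elim B fun e => {w e}, ?_, ?_, ?_⟩
  · rintro (u | e)
    · exact h.connected u
    · exact Connected.of_subsingleton (V := ({w e} : Set V))
  · rintro (u | e) (v | f) hne
    · exact h.pairwise_disjoint fun huv => hne (congrArg inl huv)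
    · exact disjoint_singleton_right.2 (h.notMem f u)
    · exact disjoint_singleton_left.2 (h.notMem e v)
    · exact disjoint_singleton.2 fun hef => hne (congrArg inr (h.injective hef))
  · rintro (u | e) (v | f) hne
    · simpa using fun a ha b hb => h.not_adj u v (fun huv => hne (congrArg inl huv)) a ha b hb
    · simp [← h.exists_adj_iff, G.adj_comm]
    · simp [← h.exists_adj_iff]
    · simpa using h.not_adj_subdivision e f

end Subdivision

section BranchSets

variable {V W : Type*} {G : SimpleGraph V} {A : W → Set V}

lemma eq_of_mem_of_pairwise_disjoint (hdisj : Pairwise (Function.onFun Disjoint A)) {i j : W}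
    {z : V} (hi : z ∈ A i) (hj : z ∈ A j) : i = j :=
  hdisj.eq (not_disjoint_iff.2 ⟨z, hi, hj⟩)

lemma not_adj_of_not_adj_of_iff {K : SimpleGraph W}
    (hA : ∀ i j, i ≠ j → (K.Adj i j ↔ ∃ a ∈ A i, ∃ b ∈ A j, G.Adj a b)) {i j : W} (hij : i ≠ j)
    (hK : ¬ K.Adj i j) {a b : V} (ha : a ∈ A i) (hb : b ∈ A j) : ¬ G.Adj a b :=
  fun hab => hK ((hA i j hij).2 ⟨a, ha, b, hb, hab⟩)

end BranchSets

section Enlarge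

variable {V U ι : Type*} {G : SimpleGraph V} {A : U ⊕ ι → Set V} {x : ι → U} {P : ι → Set V}

variable (A x P) in
def enlargeBranchSet (u : U) : Set V := A (inl u) ∪ ⋃ i : {i // x i = u}, P i

lemma mem_enlargeBranchSet {u : U} {z : V} :
    z ∈ enlargeBranchSet A x P u ↔ z ∈ A (inl u) ∨ ∃ i, x i = u ∧ z ∈ P i := by
  simp [enlargeBranchSet]

lemma union_subset_enlargeBranchSet (i : ι) :
    A (inl (x i)) ∪ P i ⊆ enlargeBranchSet A x P (x i) :=
  union_subset_union_right _ (subset_iUnion_of_subset ⟨i, rfl⟩ subset_rfl)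

lemma enlargeBranchSet_connected (hA : ∀ u, (G.induce (A (inl u))).Connected)
    (hP : ∀ i, (G.induce (A (inl (x i)) ∪ P i)).Connected) (u : U) :
    (G.induce (enlargeBranchSet A x P u)).Connected :=
  induce_union_iUnion_connected (hA u) fun ⟨i, hi⟩ => hi ▸ hP i

lemma pairwise_disjoint_enlargeBranchSet (hdisj : Pairwise (Function.onFun Disjoint A))
    (hP : ∀ i, P i ⊆ A (inr i)) : Pairwise (Function.onFun Disjoint (enlargeBranchSet A x P)) := by
  intro u v huv
  rw [Function.onFun, Set.disjoint_left]
  intro z hzu hzv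
  rcases mem_enlargeBranchSet.1 hzu with hu | ⟨i, rfl, hi⟩ <;>
    rcases mem_enlargeBranchSet.1 hzv with hv | ⟨j, rfl, hj⟩
  · exact huv (inl_injective (eq_of_mem_of_pairwise_disjoint hdisj hu hv))
  · exact inl_ne_inr (eq_of_mem_of_pairwise_disjoint hdisj hu (hP j hj))
  · exact inr_ne_inl (eq_of_mem_of_pairwise_disjoint hdisj (hP i hi) hv)
  · exact huv (congrArg x
      (inr_injective (eq_of_mem_of_pairwise_disjoint hdisj (hP i hi) (hP j hj))))

lemma notMem_enlargeBranchSet (hdisj : Pairwise (Function.onFun Disjoint A))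
    (hP : ∀ i, P i ⊆ A (inr i)) {i : ι} {z : V} (hz : z ∈ A (inr i)) (hzP : z ∉ P i) (u : U) :
    z ∉ enlargeBranchSet A x P u := by
  rw [mem_enlargeBranchSet]
  rintro (hu | ⟨j, -, hj⟩)
  · exact inr_ne_inl (eq_of_mem_of_pairwise_disjoint hdisj hz hu)
  · obtain rfl := inr_injective (eq_of_mem_of_pairwise_disjoint hdisj hz (hP j hj))
    exact hzP hj

end Enlarge

section CarefulModelOfStrictModel

variable {V U : Type*} {G : SimpleGraph V} {H : SimpleGraph U} {A : U ⊕ H.edgeSet → Set V}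
  {x : H.edgeSet → U} {P : H.edgeSet → Set V}

lemma not_adj_enlargeBranchSet
    (hA : ∀ i j, i ≠ j → ((subdiv H).Adj i j ↔ ∃ a ∈ A i, ∃ b ∈ A j, G.Adj a b))
    (hP : ∀ e, P e ⊆ A (inr e))
    (hPA : ∀ e, ∀ v ≠ x e, ∀ q ∈ P e, ∀ t ∈ A (inl v), ¬ G.Adj q t)
    {u v : U} (huv : u ≠ v) {a b : V} (ha : a ∈ enlargeBranchSet A x P u)
    (hb : b ∈ enlargeBranchSet A x P v) : ¬ G.Adj a b := by
  rcases mem_enlargeBranchSet.1 ha with haA | ⟨e, rfl, haP⟩ <;>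
    rcases mem_enlargeBranchSet.1 hb with hbA | ⟨f, rfl, hbP⟩
  · exact not_adj_of_not_adj_of_iff hA (by simpa) subdiv_adj_inl_inl haA hbA
  · exact fun hab => hPA f u huv b hbP a haA hab.symm
  · exact hPA e v huv.symm a haP b hbA
  · have hef : e ≠ f := fun hef => huv (congrArg x hef)
    exact not_adj_of_not_adj_of_iff hA (by simpa) subdiv_adj_inr_inr (hP e haP) (hP f hbP)

lemma exists_adj_enlargeBranchSet_iff
    (hA : ∀ i j, i ≠ j → ((subdiv H).Adj i j ↔ ∃ a ∈ A i, ∃ b ∈ A j, G.Adj a b))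
    (hP : ∀ e, P e ⊆ A (inr e)) {e : H.edgeSet} {y : U} {w : V}
    (hxy : (e : Sym2 U) = s(x e, y)) (hw : w ∈ A (inr e))
    (hwX : ∃ c ∈ A (inl (x e)) ∪ P e, G.Adj w c) (hwY : ∃ t ∈ A (inl y), G.Adj w t) (u : U) :
    (∃ b ∈ enlargeBranchSet A x P u, G.Adj w b) ↔ u ∈ (e : Sym2 U) := by
  constructor
  · rintro ⟨b, hb, hwb⟩
    rcases mem_enlargeBranchSet.1 hb with hbA | ⟨f, rfl, hbP⟩
    · exact (hA (inr e) (inl u) (by simp)).2 ⟨w, hw, b, hbA, hwb⟩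
    · obtain rfl : e = f := by
        by_contra hef
        exact not_adj_of_not_adj_of_iff hA (by simpa) subdiv_adj_inr_inr hw (hP f hbP) hwb
      exact hxy ▸ Sym2.mem_mk_left _ _
  · rw [hxy, Sym2.mem_iff]
    rintro (rfl | rfl)
    · obtain ⟨c, hc, hwc⟩ := hwX
      exact ⟨c, union_subset_enlargeBranchSet e hc, hwc⟩
    · obtain ⟨t, ht, hwt⟩ := hwY
      exact ⟨t, mem_enlargeBranchSet.2 (Or.inl ht), hwt⟩

lemma exists_edge_split (hconn : ∀ i, (G.induce (A i)).Connected)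
    (hA : ∀ i j, i ≠ j → ((subdiv H).Adj i j ↔ ∃ a ∈ A i, ∃ b ∈ A j, G.Adj a b))
    (e : H.edgeSet) :
    ∃ x y : U, (e : Sym2 U) = s(x, y) ∧ ∃ w ∈ A (inr e), ∃ P ⊆ A (inr e), w ∉ P ∧
      (G.induce (A (inl x) ∪ P)).Connected ∧ (∃ c ∈ A (inl x) ∪ P, G.Adj w c) ∧
      (∃ t ∈ A (inl y), G.Adj w t) ∧ ∀ v ≠ x, ∀ q ∈ P, ∀ t ∈ A (inl v), ¬ G.Adj q t := by
  obtain ⟨⟨x, y⟩, hxy⟩ := Quot.exists_rep (e : Sym2 U)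
  replace hxy : (e : Sym2 U) = s(x, y) := hxy.symm
  obtain ⟨a, ha, b, hb, hab⟩ := (hA (inl x) (inr e) (by simp)).1
    (show x ∈ (e : Sym2 U) from hxy ▸ Sym2.mem_mk_left x y)
  obtain ⟨c, hc, d, hd, hcd⟩ := (hA (inl y) (inr e) (by simp)).1
    (show y ∈ (e : Sym2 U) from hxy ▸ Sym2.mem_mk_right x y)
  obtain ⟨p⟩ := (hconn (inr e)).preconnected ⟨b, hb⟩ ⟨d, hd⟩
  obtain ⟨w, hw, P, hP, hwP, hPconn, hwX, hwY, hPY⟩ :=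
    exists_split_of_walk p (hconn (inl x)) ⟨a, ha, hab.symm⟩ ⟨c, hc, hcd.symm⟩
  refine ⟨x, y, hxy, w, hw, P, hP, hwP, hPconn, hwX, hwY, fun v hvx q hq t ht hqt => ?_⟩
  rcases eq_or_ne v y with rfl | hvy
  · exact hPY q hq t ht hqt
  · have hv : v ∈ (e : Sym2 U) := (hA (inr e) (inl v) (by simp)).2 ⟨q, hP hq, t, ht, hqt⟩
    rw [hxy, Sym2.mem_iff] at hv
    exact hv.elim hvx hvy

theorem IsCarefulMinor.exists_isCarefulModel (h : IsCarefulMinor G H) :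
    ∃ B w, IsCarefulModel G H B w := by
  obtain ⟨A, hconn, hdisj, hA⟩ := h
  choose x y hxy w hw P hP hwP hPconn hwX hwY hPA using exists_edge_split hconn hA
  refine ⟨enlargeBranchSet A x P, w,
    enlargeBranchSet_connected (fun u => hconn (inl u)) hPconn,
    pairwise_disjoint_enlargeBranchSet hdisj hP,
    fun e f hwef => inr_injective (eq_of_mem_of_pairwise_disjoint hdisj (hw e) (hwef ▸ hw f)),
    fun e => notMem_enlargeBranchSet hdisj hP (hw e) (hwP e),
    fun u v huv a ha b hb => not_adj_enlargeBranchSet hA hP hPA huv ha hb, fun e f => ?_,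
    fun e => exists_adj_enlargeBranchSet_iff hA hP (hxy e) (hw e) (hwX e) (hwY e)⟩
  rcases eq_or_ne e f with rfl | hef
  · exact G.irrefl
  · exact not_adj_of_not_adj_of_iff hA (by simpa) subdiv_adj_inr_inr (hw e) (hw f)

end CarefulModelOfStrictModel

theorem stmt12 {V U : Type*} (G : SimpleGraph V) (H : SimpleGraph U) :
    IsCarefulMinor G H ↔
      ∃ (B : U → Set V) (w : H.edgeSet → V),
        (∀ u : U, (G.induce (B u)).Connected) ∧
        Pairwise (Function.onFun Disjoint B) ∧
        Function.Injective w ∧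
        (∀ (e : H.edgeSet) (u : U), w e ∉ B u) ∧
        (∀ u v : U, u ≠ v → ∀ a ∈ B u, ∀ b ∈ B v, ¬ G.Adj a b) ∧
        (∀ e e' : H.edgeSet, ¬ G.Adj (w e) (w e')) ∧
        (∀ (e : H.edgeSet) (u : U),
          (∃ b ∈ B u, G.Adj (w e) b) ↔ u ∈ (e : Sym2 U)) := by
  constructor
  · intro h
    obtain ⟨B, w, hB⟩ := h.exists_isCarefulModel
    exact ⟨B, w, hB.connected, hB.pairwise_disjoint, hB.injective, hB.notMem, hB.not_adj,
      hB.not_adj_subdivision, hB.exists_adj_iff⟩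
  · rintro ⟨B, w, h₁, h₂, h₃, h₄, h₅, h₆, h₇⟩
    exact IsCarefulModel.isCarefulMinor ⟨h₁, h₂, h₃, h₄, h₅, h₆, h₇⟩

end
end
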